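/- arXiv:1908.09387 — 3 statements merged into one kernel-verified Lean document; each statement's English description precedes it below -/
import Mathlib

section
/- Let G be a generalized path on distinct vertices a_1,…,a_k (one of P_k, H_k, L_k with k ≥ 3), and let F, C be disjoint subsets of {a_1,…,a_k} with F ∪ C ⊊ {a_1,…,a_k} such that C is minimally simply algebraic over F in G. Then F ∪ C induces a ternary path with endpoint set F: there is an injective enumeration c_1,…,c_l of F ∪ C (with 3 ≤ l ≤ k) such that F = {c_1, c_l} and the edges of G contained in F ∪ C are exactly the sets {c_i, c_{i+1}, c_{i+2}} for 1 ≤ i ≤ l−2. -/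
variable {V : Type*}

/-- Predimension of a finite set `A` in the hypergraph with edge set `E`:
`δ(A) = |A| - #{e ∈ E : e ⊆ A}`. -/
noncomputable def hdelta (E : Set (Finset V)) (A : Finset V) : ℤ :=
  (A.card : ℤ) - ({e : Finset V | e ∈ E ∧ e ⊆ A}).ncard

/-- `A` is strong (self-sufficient) in `C`: `A ⊆ C` and `δ(A) ≤ δ(X)` for every
finite `X` with `A ⊆ X ⊆ C`. -/
def Strong (E : Set (Finset V)) (A : Finset V) (C : Set V) : Prop :=
  (↑A : Set V) ⊆ C ∧
    ∀ X : Finset V, A ⊆ X → (↑X : Set V) ⊆ C → hdelta E A ≤ hdelta E X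

/-- `B` is simply algebraic over `A`. -/
def SimplyAlg [DecidableEq V] (E : Set (Finset V)) (A B : Finset V) : Prop :=
  B.Nonempty ∧ A ∩ B = ∅ ∧ Strong E A (↑(A ∪ B) : Set V) ∧
    hdelta E (A ∪ B) - hdelta E A = 0 ∧
    ∀ B' : Finset V, B' ⊆ B → B' ≠ B → B'.Nonempty →
      hdelta E (A ∪ B') - hdelta E A ≠ 0

/-- `B` is minimally simply algebraic over `A`. -/
def MinSimplyAlg [DecidableEq V] (E : Set (Finset V)) (A B : Finset V) : Prop :=
  SimplyAlg E A B ∧ ∀ A' : Finset V, A' ⊆ A → A' ≠ A → ¬ SimplyAlg E A' B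

/-- `B1` and `B2` are freely joined over `A = B1 ∩ B2`. -/
def FreelyJoined (E : Set (Finset V)) (B1 B2 : Set V) : Prop :=
  ∀ e ∈ E, (↑e : Set V) ⊆ B1 ∪ B2 → (↑e : Set V) ⊆ B1 ∨ (↑e : Set V) ⊆ B2

/-! Generalized paths on the concrete vertices `a_i = i`, `1 ≤ i ≤ k` (for `k ≥ 3`). -/

/-- edge set of the ternary `k`-path `P_k`. -/
def edgesP (k : ℕ) : Set (Finset ℕ) :=
  {e | ∃ i, 1 ≤ i ∧ i ≤ k - 2 ∧ e = {i, i + 1, i + 2}}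

/-- edge set of the ternary closed-`k`-path `H_k`. -/
def edgesH (k : ℕ) : Set (Finset ℕ) :=
  edgesP k ∪ {({k - 1, k, 1} : Finset ℕ)}

/-- edge set of the ternary `k`-loop `L_k`. -/
def edgesL (k : ℕ) : Set (Finset ℕ) :=
  edgesH k ∪ {({k, 1, 2} : Finset ℕ)}


/-! ### Auxiliary positional combinatorics -/

section PosAux

variable (W : ℕ → Prop) [DecidablePred W]

/-- starts of windows of `W` fully inside `X`. -/
def eWf (X : Finset ℕ) : Finset ℕ :=
  X.filter (fun q => W q ∧ q + 1 ∈ X ∧ q + 2 ∈ X)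

/-- number of windows of `W` inside `X`. -/
def eW (X : Finset ℕ) : ℕ := (eWf W X).card

/-- positional predimension. -/
def pdel (X : Finset ℕ) : ℤ := (X.card : ℤ) - (eW W X : ℤ)

lemma mem_eWf {X : Finset ℕ} {q : ℕ} :
    q ∈ eWf W X ↔ q ∈ X ∧ W q ∧ q + 1 ∈ X ∧ q + 2 ∈ X := by
  simp [eWf, Finset.mem_filter]

lemma eW_mono {X Y : Finset ℕ} (h : X ⊆ Y) : eW W X ≤ eW W Y := by
  apply Finset.card_le_card
  intro q hq
  rw [mem_eWf] at hq ⊢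
  exact ⟨h hq.1, hq.2.1, h hq.2.2.1, h hq.2.2.2⟩

lemma eW_bound {X : Finset ℕ} (h : 1 ≤ eW W X) : eW W X + 2 ≤ X.card := by
  obtain ⟨q0, hq0⟩ : (eWf W X).Nonempty := Finset.card_pos.mp h
  rw [mem_eWf] at hq0
  have hne : X.Nonempty := ⟨q0, hq0.1⟩
  have hMX : X.max' hne ∈ X := X.max'_mem hne
  have hq2M : q0 + 2 ≤ X.max' hne := Finset.le_max' _ _ hq0.2.2.2
  have hne2 : (X.erase (X.max' hne)).Nonempty :=
    ⟨q0, Finset.mem_erase.mpr ⟨by omega, hq0.1⟩⟩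
  have hM2 : (X.erase (X.max' hne)).max' hne2 ∈ X.erase (X.max' hne) :=
    Finset.max'_mem _ _
  have hsub : eWf W X ⊆ (X.erase (X.max' hne)).erase ((X.erase (X.max' hne)).max' hne2) := by
    intro q hq
    rw [mem_eWf] at hq
    have h1 : q + 2 ≤ X.max' hne := Finset.le_max' _ _ hq.2.2.2
    have h2 : q + 1 ≤ (X.erase (X.max' hne)).max' hne2 :=
      Finset.le_max' _ _ (Finset.mem_erase.mpr ⟨by omega, hq.2.2.1⟩)
    exact Finset.mem_erase.mpr ⟨by omega, Finset.mem_erase.mpr ⟨by omega, hq.1⟩⟩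
  have hcle := Finset.card_le_card hsub
  rw [Finset.card_erase_of_mem hM2, Finset.card_erase_of_mem hMX] at hcle
  have hcard : 2 ≤ X.card := by
    have hne12 : q0 ≠ q0 + 2 := by omega
    have := Finset.one_lt_card.mpr ⟨q0, hq0.1, q0 + 2, hq0.2.2.2, hne12⟩
    omega
  have : eW W X ≤ X.card - 1 - 1 := hcle
  omega

lemma eW_small {X : Finset ℕ} (h : X.card ≤ 2) : eW W X = 0 := by
  by_contra hne
  have := eW_bound W (X := X) (by omega)
  omega

lemma eW_split {t : ℕ} {X : Finset ℕ}
    (hcut : ∀ q, W q → q ∈ X → q + 1 ∈ X → q + 2 ∈ X → q + 2 ≤ t ∨ t ≤ q) :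
    eW W X = eW W (X.filter (fun x => x ≤ t)) + eW W (X.filter (fun x => t ≤ x)) := by
  have hXl : ∀ q, q ∈ eWf W (X.filter (fun x => x ≤ t)) ↔ q ∈ eWf W X ∧ q + 2 ≤ t := by
    intro q
    simp only [mem_eWf, Finset.mem_filter]
    constructor
    · rintro ⟨⟨hqX, hqt⟩, hW, ⟨h1X, h1t⟩, ⟨h2X, h2t⟩⟩
      exact ⟨⟨hqX, hW, h1X, h2X⟩, h2t⟩
    · rintro ⟨⟨hqX, hW, h1X, h2X⟩, h2t⟩
      exact ⟨⟨hqX, by omega⟩, hW, ⟨h1X, by omega⟩, ⟨h2X, h2t⟩⟩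
  have hXr : ∀ q, q ∈ eWf W (X.filter (fun x => t ≤ x)) ↔ q ∈ eWf W X ∧ t ≤ q := by
    intro q
    simp only [mem_eWf, Finset.mem_filter]
    constructor
    · rintro ⟨⟨hqX, hqt⟩, hW, ⟨h1X, h1t⟩, ⟨h2X, h2t⟩⟩
      exact ⟨⟨hqX, hW, h1X, h2X⟩, hqt⟩
    · rintro ⟨⟨hqX, hW, h1X, h2X⟩, hqt⟩
      exact ⟨⟨hqX, hqt⟩, hW, ⟨h1X, by omega⟩, ⟨h2X, by omega⟩⟩
  have key : eWf W X = eWf W (X.filter (fun x => x ≤ t)) ∪ eWf W (X.filter (fun x => t ≤ x)) := by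
    ext q
    rw [Finset.mem_union, hXl, hXr]
    constructor
    · intro h
      have h' := (mem_eWf W).mp h
      rcases hcut q h'.2.1 h'.1 h'.2.2.1 h'.2.2.2 with hc | hc
      · exact Or.inl ⟨h, hc⟩
      · exact Or.inr ⟨h, hc⟩
    · rintro (⟨h, _⟩ | ⟨h, _⟩) <;> exact h
  have hdisj : Disjoint (eWf W (X.filter (fun x => x ≤ t))) (eWf W (X.filter (fun x => t ≤ x))) := by
    rw [Finset.disjoint_left]
    intro q hq hq'
    have h1 := (hXl q).mp hq
    have h2 := (hXr q).mp hq'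
    omega
  rw [eW, key, Finset.card_union_of_disjoint hdisj]
  rfl

lemma eW_interval : ∀ (n : ℕ) (X : Finset ℕ), X.card = n → 1 ≤ eW W X →
    eW W X + 2 = n → ∃ p, X = Finset.Icc p (p + n - 1) := by
  intro n
  induction n using Nat.strong_induction_on with
  | _ n ih =>
    intro X hcard h1 h2
    have hn3 : 3 ≤ n := by have := eW_bound W h1; omega
    rcases Nat.lt_or_ge n 4 with hn | hn
    · have hn : n = 3 := by omega
      obtain ⟨q, hq⟩ : (eWf W X).Nonempty := Finset.card_pos.mp h1
      rw [mem_eWf] at hq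
      have hIcc : ({q, q + 1, q + 2} : Finset ℕ) = Finset.Icc q (q + 2) := by
        ext x; simp [Finset.mem_Icc, Finset.mem_insert]; omega
      have hsub : ({q, q + 1, q + 2} : Finset ℕ) ⊆ X := by
        intro x hx
        simp only [Finset.mem_insert, Finset.mem_singleton] at hx
        rcases hx with rfl | rfl | rfl
        · exact hq.1
        · exact hq.2.2.1
        · exact hq.2.2.2
      have hc3 : ({q, q + 1, q + 2} : Finset ℕ).card = 3 := by
        rw [hIcc, Nat.card_Icc]; omega
      have hXeq : ({q, q + 1, q + 2} : Finset ℕ) = X :=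
        Finset.eq_of_subset_of_card_le hsub (by omega)
      refine ⟨q, ?_⟩
      rw [← hXeq, hIcc]
      congr 1
      omega
    · have hne : X.Nonempty := Finset.card_pos.mp (by omega)
      have hMX : X.max' hne ∈ X := X.max'_mem hne
      set M := X.max' hne with hMdef
      have hM3 : 3 ≤ M := by
        have hsubr : X ⊆ Finset.range (M + 1) := by
          intro x hx
          rw [Finset.mem_range]
          have := Finset.le_max' X x hx
          omega
        have := Finset.card_le_card hsubr
        rw [Finset.card_range] at this
        omega
      have herase : eWf W (X.erase M) = (eWf W X).erase (M - 2) := by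
        ext q
        rw [Finset.mem_erase, mem_eWf, mem_eWf]
        simp only [Finset.mem_erase]
        constructor
        · rintro ⟨⟨hqM, hqX⟩, hW, ⟨h1M, h1X⟩, ⟨h2M, h2X⟩⟩
          have : q + 2 ≤ M := Finset.le_max' _ _ h2X
          exact ⟨by omega, hqX, hW, h1X, h2X⟩
        · rintro ⟨hqne, hqX, hW, h1X, h2X⟩
          have hq2 : q + 2 ≤ M := Finset.le_max' _ _ h2X
          have hq2ne : q + 2 ≠ M := by omega
          exact ⟨⟨by omega, hqX⟩, hW, ⟨by omega, h1X⟩, ⟨hq2ne, h2X⟩⟩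
      by_cases hmem : M - 2 ∈ eWf W X
      · have heq : eW W (X.erase M) = eW W X - 1 := by
          rw [eW, herase, Finset.card_erase_of_mem hmem]; rfl
        have hcarde : (X.erase M).card = n - 1 := by
          rw [Finset.card_erase_of_mem hMX, hcard]
        have h1' : 1 ≤ eW W (X.erase M) := by omega
        have h2' : eW W (X.erase M) + 2 = n - 1 := by omega
        obtain ⟨p, hp⟩ := ih (n - 1) (by omega) (X.erase M) hcarde h1' h2'
        rw [mem_eWf] at hmem
        have hM1X : M - 1 ∈ X := by
          have h21 := hmem.2.2.1
          have heq21 : M - 2 + 1 = M - 1 := by omega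
          rwa [heq21] at h21
        have hM1mem : M - 1 ∈ X.erase M := Finset.mem_erase.mpr ⟨by omega, hM1X⟩
        have hub : ∀ x ∈ X.erase M, x ≤ M - 1 := by
          intro x hx
          rw [Finset.mem_erase] at hx
          have := Finset.le_max' X x hx.2
          omega
        have hb1 : M - 1 ≤ p + (n - 1) - 1 := by
          have := hp ▸ hM1mem
          rw [Finset.mem_Icc] at this
          omega
        have hb2 : p + (n - 1) - 1 ≤ M - 1 := by
          have hpn : p + (n - 1) - 1 ∈ X.erase M := by
            rw [hp, Finset.mem_Icc]
            have hpmem : p ∈ X.erase M := by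
              rw [hp, Finset.mem_Icc]; omega
            omega
          exact hub _ hpn
        have hMeq : M = p + n - 1 := by omega
        refine ⟨p, ?_⟩
        have hins : X = insert M (X.erase M) := (Finset.insert_erase hMX).symm
        rw [hins, hp]
        ext x
        simp only [Finset.mem_insert, Finset.mem_Icc]
        omega
      · exfalso
        have heq : eW W (X.erase M) = eW W X := by
          rw [eW, herase, Finset.erase_eq_of_notMem hmem]; rfl
        have hcarde : (X.erase M).card = n - 1 := by
          rw [Finset.card_erase_of_mem hMX, hcard]
        have := eW_bound W (X := X.erase M) (by omega)
        omega

end PosAux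


section PosAux2

variable (W : ℕ → Prop) [DecidablePred W]

/-- positional version of simple algebraicity. -/
def PSA (A B : Finset ℕ) : Prop :=
  B.Nonempty ∧ A ∩ B = ∅ ∧
    (∀ X : Finset ℕ, A ⊆ X → X ⊆ A ∪ B → pdel W A ≤ pdel W X) ∧
    pdel W (A ∪ B) = pdel W A ∧
    ∀ B' : Finset ℕ, B' ⊆ B → B' ≠ B → B'.Nonempty → pdel W (A ∪ B') ≠ pdel W A

lemma eW_Icc (p r : ℕ) (hpr : p + 2 ≤ r) (h : ∀ q, p ≤ q → q + 2 ≤ r → W q) :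
    eW W (Finset.Icc p r) = r - 1 - p := by
  have hf : eWf W (Finset.Icc p r) = Finset.Icc p (r - 2) := by
    ext q
    rw [mem_eWf]
    simp only [Finset.mem_Icc]
    constructor
    · rintro ⟨⟨ha, hb⟩, _, ⟨hc, hd⟩, ⟨he', hf'⟩⟩
      exact ⟨ha, by omega⟩
    · rintro ⟨ha, hb⟩
      exact ⟨⟨ha, by omega⟩, h q ha (by omega), ⟨by omega, by omega⟩, ⟨by omega, by omega⟩⟩
  rw [eW, hf, Nat.card_Icc]
  omega

lemma triple_eq_Icc (q : ℕ) : ({q, q + 1, q + 2} : Finset ℕ) = Finset.Icc q (q + 2) := by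
  ext x; simp only [Finset.mem_insert, Finset.mem_singleton, Finset.mem_Icc]; omega

lemma card_triple (q : ℕ) : ({q, q + 1, q + 2} : Finset ℕ).card = 3 := by
  rw [triple_eq_Icc, Nat.card_Icc]; omega

lemma erase_triple_left (q : ℕ) :
    ({q, q + 1, q + 2} : Finset ℕ).erase q = {q + 1, q + 2} := by
  ext x
  simp only [Finset.mem_erase, Finset.mem_insert, Finset.mem_singleton]
  omega

lemma erase_triple_right (q : ℕ) :
    ({q, q + 1, q + 2} : Finset ℕ).erase (q + 2) = {q, q + 1} := by
  ext x
  simp only [Finset.mem_erase, Finset.mem_insert, Finset.mem_singleton]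
  omega

lemma psa_triple {q x : ℕ} (hW : W q) (hx : x ∈ ({q, q + 1, q + 2} : Finset ℕ)) :
    PSA W (({q, q + 1, q + 2} : Finset ℕ).erase x) {x} := by
  set T : Finset ℕ := {q, q + 1, q + 2} with hT
  have hcT : T.card = 3 := card_triple q
  have hxT : x ∉ T.erase x := Finset.notMem_erase x T
  have hU : T.erase x ∪ {x} = T := by
    rw [Finset.union_comm]; exact Finset.insert_erase hx
  have hcA : (T.erase x).card = 2 := by
    rw [Finset.card_erase_of_mem hx, hcT]
  have heWA : eW W (T.erase x) = 0 := eW_small W (by omega)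
  have heWT : eW W T = 1 := by
    have h1 : q ∈ eWf W T := by
      rw [mem_eWf]
      refine ⟨?_, hW, ?_, ?_⟩ <;> simp [hT]
    have hle : 1 ≤ eW W T := Finset.card_pos.mpr ⟨q, h1⟩
    have := eW_bound W hle
    omega
  have hpA : pdel W (T.erase x) = 2 := by simp [pdel, hcA, heWA]
  have hpT : pdel W T = 2 := by simp [pdel, hcT, heWT]
  refine ⟨Finset.singleton_nonempty x, Finset.inter_singleton_of_notMem hxT, ?_, ?_, ?_⟩
  · intro X hAX hXT
    rw [hU] at hXT
    by_cases hxX : x ∈ X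
    · have hXeq : X = T := by
        apply Finset.Subset.antisymm hXT
        rw [← hU]
        intro y hy
        rcases Finset.mem_union.mp hy with h | h
        · exact hAX h
        · rw [Finset.mem_singleton] at h
          exact h ▸ hxX
      rw [hXeq, hpT, hpA]
    · have hXeq : X = T.erase x := by
        apply Finset.Subset.antisymm
        · intro y hy
          exact Finset.mem_erase.mpr ⟨fun h => hxX (h ▸ hy), hXT hy⟩
        · exact hAX
      rw [hXeq, hpA]
  · rw [hU, hpT, hpA]
  · intro B' hB1 hB2 hB3
    exfalso
    rcases Finset.subset_singleton_iff.mp hB1 with h | h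
    · exact hB3.ne_empty h
    · exact hB2 h

end PosAux2


lemma core0 (W : ℕ → Prop) [DecidablePred W] (F C : Finset ℕ)
    (hdisj : F ∩ C = ∅) (hCne : C.Nonempty)
    (h1 : ∀ X : Finset ℕ, F ⊆ X → X ⊆ F ∪ C → pdel W F ≤ pdel W X)
    (h2 : pdel W (F ∪ C) = pdel W F)
    (h3 : ∀ B' : Finset ℕ, B' ⊆ C → B' ≠ C → B'.Nonempty → pdel W (F ∪ B') ≠ pdel W F)
    (h4 : ∀ F' : Finset ℕ, F' ⊆ F → F' ≠ F → ¬ PSA W F' C) :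
    ∃ p r : ℕ, p + 2 ≤ r ∧ F ∪ C = Finset.Icc p r ∧
      (∀ q, p ≤ q → q + 2 ≤ r → W q) ∧
      (F = {p, r} ∨ (r = p + 2 ∧ ∃ x, C = {x} ∧ F = (F ∪ C).erase x)) := by
  have hdisjFC : Disjoint F C := Finset.disjoint_iff_inter_eq_empty.mpr hdisj
  have hcardU : (F ∪ C).card = F.card + C.card := Finset.card_union_of_disjoint hdisjFC
  have hcardFB : ∀ B' : Finset ℕ, B' ⊆ C → (F ∪ B').card = F.card + B'.card :=
    fun B' hB' => Finset.card_union_of_disjoint (hdisjFC.mono_right hB')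
  have he : eW W (F ∪ C) = eW W F + C.card := by
    have h2' := h2
    simp only [pdel] at h2'
    omega
  have dgt : ∀ X : Finset ℕ, F ⊆ X → X ⊆ F ∪ C → X ≠ F → X ≠ F ∪ C →
      pdel W F + 1 ≤ pdel W X := by
    intro X hFX hXS hXF hXS'
    have hge := h1 X hFX hXS
    have hB : X \ F ⊆ C := by
      intro x hx
      rw [Finset.mem_sdiff] at hx
      rcases Finset.mem_union.mp (hXS hx.1) with h | h
      · exact absurd h hx.2
      · exact h
    have hU : F ∪ (X \ F) = X := Finset.union_sdiff_of_subset hFX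
    have hne : (X \ F).Nonempty := by
      rw [Finset.sdiff_nonempty]
      intro hsub
      exact hXF (Finset.Subset.antisymm hsub hFX)
    have hne2 : X \ F ≠ C := fun h => hXS' (by rw [← hU, h])
    have := h3 (X \ F) hB hne2 hne
    rw [hU] at this
    omega
  have NC : ∀ t : ℕ, (∃ a ∈ F ∪ C, a < t) → (∃ b ∈ F ∪ C, t < b) →
      (∀ q, W q → q ∈ F ∪ C → q + 1 ∈ F ∪ C → q + 2 ∈ F ∪ C → q + 2 ≤ t ∨ t ≤ q) →
      False := by
    rintro t ⟨a, haS, hat⟩ ⟨b, hbS, htb⟩ hcut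
    have hsplit : ∀ B' : Finset ℕ, B' ⊆ C →
        eW W (F ∪ B') = eW W (F.filter (fun x => x ≤ t) ∪ B'.filter (fun x => x ≤ t))
          + eW W (F.filter (fun x => t ≤ x) ∪ B'.filter (fun x => t ≤ x)) := by
      intro B' hB'
      have hsubS : F ∪ B' ⊆ F ∪ C := Finset.union_subset_union_right hB'
      have := eW_split W (t := t) (X := F ∪ B')
        (fun q hW hq hq1 hq2 => hcut q hW (hsubS hq) (hsubS hq1) (hsubS hq2))
      rwa [Finset.filter_union, Finset.filter_union] at this
    set Fl := F.filter (fun x => x ≤ t) with hFl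
    set Fr := F.filter (fun x => t ≤ x) with hFr
    set Cl := C.filter (fun x => x ≤ t) with hCl
    set Cr := C.filter (fun x => t ≤ x) with hCr
    have e4 : eW W F = eW W Fl + eW W Fr := by
      have h0 := hsplit ∅ (Finset.empty_subset C)
      simpa [Finset.filter_empty, Finset.union_empty] using h0
    have mkPSA : ∀ G : Finset ℕ, G ⊆ F →
        (∀ B' : Finset ℕ, B' ⊆ C → eW W (F ∪ B') + eW W G = eW W (G ∪ B') + eW W F) →
        F = G := by
      intro G hGF hkey
      by_contra hne
      apply h4 G hGF (fun h => hne h.symm)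
      have hGC : Disjoint G C := hdisjFC.mono_left hGF
      have hpd : ∀ B' : Finset ℕ, B' ⊆ C →
          pdel W (G ∪ B') - pdel W G = pdel W (F ∪ B') - pdel W F := by
        intro B' hB'
        have hk := hkey B' hB'
        have c1 := hcardFB B' hB'
        have c2 : (G ∪ B').card = G.card + B'.card :=
          Finset.card_union_of_disjoint (hGC.mono_right hB')
        simp only [pdel]
        omega
      refine ⟨hCne, ?_, ?_, ?_, ?_⟩
      · have hsub : G ∩ C ⊆ F ∩ C := Finset.inter_subset_inter hGF (Finset.Subset.refl C)
        rw [hdisj] at hsub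
        exact Finset.subset_empty.mp hsub
      · intro X hGX hXGC
        have hB : X \ G ⊆ C := by
          intro x hx
          rw [Finset.mem_sdiff] at hx
          rcases Finset.mem_union.mp (hXGC hx.1) with h | h
          · exact absurd h hx.2
          · exact h
        have hU : G ∪ (X \ G) = X := Finset.union_sdiff_of_subset hGX
        have hp := hpd (X \ G) hB
        have hg := h1 (F ∪ (X \ G)) Finset.subset_union_left
          (Finset.union_subset_union_right hB)
        rw [hU] at hp
        omega
      · have hp := hpd C (Finset.Subset.refl C)
        omega
      · intro B' hB'C hB'ne hB'nonempty
        have hp := hpd B' hB'C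
        have := h3 B' hB'C hB'ne hB'nonempty
        omega
    by_cases hClE : Cl = ∅
    · have hCt : ∀ x ∈ C, ¬ x ≤ t := by
        intro x hx hle
        have hmem : x ∈ Cl := by rw [hCl]; exact Finset.mem_filter.mpr ⟨hx, hle⟩
        rw [hClE] at hmem
        exact absurd hmem (Finset.notMem_empty x)
      have hkey : ∀ B' : Finset ℕ, B' ⊆ C →
          eW W (F ∪ B') + eW W Fr = eW W (Fr ∪ B') + eW W F := by
        intro B' hB'
        have hBl : B'.filter (fun x => x ≤ t) = ∅ := by
          rw [Finset.filter_eq_empty_iff]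
          intro x hx
          exact hCt x (hB' hx)
        have hBr : B'.filter (fun x => t ≤ x) = B' := by
          rw [Finset.filter_eq_self]
          intro x hx
          have := hCt x (hB' hx)
          omega
        have hsp := hsplit B' hB'
        rw [hBl, hBr, Finset.union_empty] at hsp
        omega
      have hFeq := mkPSA Fr (Finset.filter_subset _ _) hkey
      rcases Finset.mem_union.mp haS with h | h
      · rw [hFeq, hFr] at h
        have := (Finset.mem_filter.mp h).2
        omega
      · exact hCt a h (by omega)
    · by_cases hCrE : Cr = ∅
      · have hCt : ∀ x ∈ C, ¬ t ≤ x := by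
          intro x hx hle
          have hmem : x ∈ Cr := by rw [hCr]; exact Finset.mem_filter.mpr ⟨hx, hle⟩
          rw [hCrE] at hmem
          exact absurd hmem (Finset.notMem_empty x)
        have hkey : ∀ B' : Finset ℕ, B' ⊆ C →
            eW W (F ∪ B') + eW W Fl = eW W (Fl ∪ B') + eW W F := by
          intro B' hB'
          have hBr : B'.filter (fun x => t ≤ x) = ∅ := by
            rw [Finset.filter_eq_empty_iff]
            intro x hx
            exact hCt x (hB' hx)
          have hBl : B'.filter (fun x => x ≤ t) = B' := by
            rw [Finset.filter_eq_self]
            intro x hx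
            have := hCt x (hB' hx)
            omega
          have hsp := hsplit B' hB'
          rw [hBl, hBr, Finset.union_empty] at hsp
          omega
        have hFeq := mkPSA Fl (Finset.filter_subset _ _) hkey
        rcases Finset.mem_union.mp hbS with h | h
        · rw [hFeq, hFl] at h
          have := (Finset.mem_filter.mp h).2
          omega
        · exact hCt b h (by omega)
      · obtain ⟨cl, hclmem⟩ := Finset.nonempty_of_ne_empty hClE
        obtain ⟨cr, hcrmem⟩ := Finset.nonempty_of_ne_empty hCrE
        set Ct := C.filter (fun x => x = t) with hCtdef
        have hCtsub : Ct ⊆ {t} := by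
          intro x hx
          rw [hCtdef, Finset.mem_filter] at hx
          simp [hx.2]
        have hCtcard : Ct.card ≤ 1 := by
          have := Finset.card_le_card hCtsub
          simpa using this
        have hClCl : Cl.filter (fun x => x ≤ t) = Cl := by
          rw [Finset.filter_eq_self]
          intro x hx
          rw [hCl, Finset.mem_filter] at hx
          exact hx.2
        have hCrCr : Cr.filter (fun x => t ≤ x) = Cr := by
          rw [Finset.filter_eq_self]
          intro x hx
          rw [hCr, Finset.mem_filter] at hx
          exact hx.2
        have hClCt : Cl.filter (fun x => t ≤ x) = Ct := by
          ext x
          rw [Finset.mem_filter, hCl, hCtdef, Finset.mem_filter, Finset.mem_filter]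
          constructor
          · rintro ⟨⟨hxC, hx1⟩, hx2⟩
            exact ⟨hxC, by omega⟩
          · rintro ⟨hxC, hx⟩
            exact ⟨⟨hxC, by omega⟩, by omega⟩
        have hCrCt : Cr.filter (fun x => x ≤ t) = Ct := by
          ext x
          rw [Finset.mem_filter, hCr, hCtdef, Finset.mem_filter, Finset.mem_filter]
          constructor
          · rintro ⟨⟨hxC, hx1⟩, hx2⟩
            exact ⟨hxC, by omega⟩
          · rintro ⟨hxC, hx⟩
            exact ⟨⟨hxC, by omega⟩, by omega⟩
        have e1 : eW W (F ∪ Cl) = eW W (Fl ∪ Cl) + eW W (Fr ∪ Ct) := by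
          have hsp := hsplit Cl (by rw [hCl]; exact Finset.filter_subset _ _)
          rwa [hClCl, hClCt] at hsp
        have e2 : eW W (F ∪ Cr) = eW W (Fl ∪ Ct) + eW W (Fr ∪ Cr) := by
          have hsp := hsplit Cr (by rw [hCr]; exact Finset.filter_subset _ _)
          rwa [hCrCt, hCrCr] at hsp
        have e3 : eW W (F ∪ C) = eW W (Fl ∪ Cl) + eW W (Fr ∪ Cr) := by
          have hsp := hsplit C (Finset.Subset.refl C)
          rwa [← hCl, ← hCr] at hsp
        have m1 : eW W Fr ≤ eW W (Fr ∪ Ct) := eW_mono W Finset.subset_union_left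
        have m2 : eW W Fl ≤ eW W (Fl ∪ Ct) := eW_mono W Finset.subset_union_left
        have hCunion : Cl ∪ Cr = C := by
          rw [hCl, hCr, ← Finset.filter_or]
          apply Finset.filter_true_of_mem
          intro x _
          omega
        have hCinter : Cl ∩ Cr = Ct := by
          rw [hCl, hCr, hCtdef, ← Finset.filter_and]
          apply Finset.filter_congr
          intro x _
          constructor
          · intro h; omega
          · intro h; omega
        have hcardC : Cl.card + Cr.card = C.card + Ct.card := by
          have := Finset.card_union_add_card_inter Cl Cr
          rw [hCunion, hCinter] at this
          omega
        have hClsub : Cl ⊆ C := by rw [hCl]; exact Finset.filter_subset _ _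
        have hCrsub : Cr ⊆ C := by rw [hCr]; exact Finset.filter_subset _ _
        have cA : (F ∪ Cl).card = F.card + Cl.card := hcardFB Cl hClsub
        have cB : (F ∪ Cr).card = F.card + Cr.card := hcardFB Cr hCrsub
        have dA := h1 (F ∪ Cl) Finset.subset_union_left (Finset.union_subset_union_right hClsub)
        have dB := h1 (F ∪ Cr) Finset.subset_union_left (Finset.union_subset_union_right hCrsub)
        by_cases hClC : Cl = C
        · -- C entirely ≤ t, and t ∈ C
          have htC : t ∈ C := by
            have hx := hcrmem
            rw [hCr, Finset.mem_filter] at hx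
            have hx2 : cr ∈ Cl := hClC ▸ hx.1
            rw [hCl, Finset.mem_filter] at hx2
            have hcrt : cr = t := by omega
            rw [← hcrt]
            exact hx.1
          have hCrt : Cr = {t} := by
            apply Finset.Subset.antisymm
            · intro x hx
              rw [hCr, Finset.mem_filter] at hx
              have hx2 : x ∈ Cl := hClC ▸ hx.1
              rw [hCl, Finset.mem_filter] at hx2
              simp only [Finset.mem_singleton]
              omega
            · intro x hx
              rw [Finset.mem_singleton] at hx
              rw [hCr, Finset.mem_filter]
              exact ⟨hx ▸ htC, by omega⟩
          by_cases hCsing : C = {t}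
          · -- the singleton special case
            have hCc1 : C.card = 1 := by rw [hCsing]; simp
            have hClt : Cl = {t} := hClC.trans hCsing
            have hsC := hsplit C (Finset.Subset.refl C)
            rw [← hCl, ← hCr, hClt, hCrt] at hsC
            rw [hCsing] at hsC
            -- hsC : eW (F ∪ {t}) = eW (Fl ∪ {t}) + eW (Fr ∪ {t})
            have hsum : eW W (Fl ∪ {t}) + eW W (Fr ∪ {t}) = eW W Fl + eW W Fr + 1 := by
              have heC := he
              rw [hCsing] at heC
              simp only [Finset.card_singleton] at heC
              omega
            have m1' : eW W Fl ≤ eW W (Fl ∪ {t}) := eW_mono W Finset.subset_union_left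
            have m2' : eW W Fr ≤ eW W (Fr ∪ {t}) := eW_mono W Finset.subset_union_left
            by_cases hLeft : eW W Fl + 1 ≤ eW W (Fl ∪ {t})
            · -- a window ends at t
              have hnsub : ¬ (eWf W (Fl ∪ {t}) ⊆ eWf W Fl) := by
                intro h
                have hc : eW W (Fl ∪ {t}) ≤ eW W Fl := by
                  unfold eW
                  exact Finset.card_le_card h
                omega
              obtain ⟨q, hqmem, hqnot⟩ := Finset.not_subset.mp hnsub
              rw [mem_eWf] at hqmem
              have hle : ∀ y, y ∈ Fl ∪ {t} → y ≤ t := by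
                intro y hy
                rcases Finset.mem_union.mp hy with h | h
                · rw [hFl, Finset.mem_filter] at h
                  exact h.2
                · rw [Finset.mem_singleton] at h
                  omega
              have htwin : q = t ∨ q + 1 = t ∨ q + 2 = t := by
                by_contra hc
                push_neg at hc
                apply hqnot
                rw [mem_eWf]
                have hmv : ∀ y, y ∈ Fl ∪ {t} → y ≠ t → y ∈ Fl := by
                  intro y hy hyne
                  rcases Finset.mem_union.mp hy with h | h
                  · exact h
                  · rw [Finset.mem_singleton] at h
                    exact absurd h hyne
                exact ⟨hmv q hqmem.1 hc.1, hqmem.2.1,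
                  hmv _ hqmem.2.2.1 hc.2.1, hmv _ hqmem.2.2.2 hc.2.2⟩
              have ht2 : t = q + 2 := by
                have := hle (q+2) hqmem.2.2.2
                omega
              have hqF : q ∈ F := by
                have hqFl : q ∈ Fl := by
                  rcases Finset.mem_union.mp hqmem.1 with h | h
                  · exact h
                  · rw [Finset.mem_singleton] at h
                    omega
                rw [hFl, Finset.mem_filter] at hqFl
                exact hqFl.1
              have hq1F : q + 1 ∈ F := by
                have hq1Fl : q + 1 ∈ Fl := by
                  rcases Finset.mem_union.mp hqmem.2.2.1 with h | h
                  · exact h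
                  · rw [Finset.mem_singleton] at h
                    omega
                rw [hFl, Finset.mem_filter] at hq1Fl
                exact hq1Fl.1
              have hpsa : PSA W {q, q + 1} C := by
                have hps := psa_triple W hqmem.2.1 (x := q + 2) (by simp)
                rw [erase_triple_right] at hps
                rw [hCsing, ht2]
                exact hps
              have hsubF : ({q, q + 1} : Finset ℕ) ⊆ F := by
                intro y hy
                rcases Finset.mem_insert.mp hy with h | h
                · exact h ▸ hqF
                · rw [Finset.mem_singleton] at h
                  exact h ▸ hq1F
              have hneF : ({q, q + 1} : Finset ℕ) ≠ F := by
                intro h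
                rcases Finset.mem_union.mp hbS with hb | hb
                · rw [← h] at hb
                  rcases Finset.mem_insert.mp hb with h' | h'
                  · omega
                  · rw [Finset.mem_singleton] at h'
                    omega
                · rw [hCsing, Finset.mem_singleton] at hb
                  omega
              exact h4 _ hsubF hneF hpsa
            · -- a window starts at t
              have hRight : eW W Fr + 1 ≤ eW W (Fr ∪ {t}) := by omega
              have hnsub : ¬ (eWf W (Fr ∪ {t}) ⊆ eWf W Fr) := by
                intro h
                have hc : eW W (Fr ∪ {t}) ≤ eW W Fr := by
                  unfold eW
                  exact Finset.card_le_card h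
                omega
              obtain ⟨q, hqmem, hqnot⟩ := Finset.not_subset.mp hnsub
              rw [mem_eWf] at hqmem
              have hge : ∀ y, y ∈ Fr ∪ {t} → t ≤ y := by
                intro y hy
                rcases Finset.mem_union.mp hy with h | h
                · rw [hFr, Finset.mem_filter] at h
                  exact h.2
                · rw [Finset.mem_singleton] at h
                  omega
              have htwin : q = t ∨ q + 1 = t ∨ q + 2 = t := by
                by_contra hc
                push_neg at hc
                apply hqnot
                rw [mem_eWf]
                have hmv : ∀ y, y ∈ Fr ∪ {t} → y ≠ t → y ∈ Fr := by
                  intro y hy hyne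
                  rcases Finset.mem_union.mp hy with h | h
                  · exact h
                  · rw [Finset.mem_singleton] at h
                    exact absurd h hyne
                exact ⟨hmv q hqmem.1 hc.1, hqmem.2.1,
                  hmv _ hqmem.2.2.1 hc.2.1, hmv _ hqmem.2.2.2 hc.2.2⟩
              have ht2 : t = q := by
                have := hge q hqmem.1
                omega
              have hq1F : q + 1 ∈ F := by
                have hq1Fr : q + 1 ∈ Fr := by
                  rcases Finset.mem_union.mp hqmem.2.2.1 with h | h
                  · exact h
                  · rw [Finset.mem_singleton] at h
                    omega
                rw [hFr, Finset.mem_filter] at hq1Fr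
                exact hq1Fr.1
              have hq2F : q + 2 ∈ F := by
                have hq2Fr : q + 2 ∈ Fr := by
                  rcases Finset.mem_union.mp hqmem.2.2.2 with h | h
                  · exact h
                  · rw [Finset.mem_singleton] at h
                    omega
                rw [hFr, Finset.mem_filter] at hq2Fr
                exact hq2Fr.1
              have hpsa : PSA W {q + 1, q + 2} C := by
                have hps := psa_triple W hqmem.2.1 (x := q) (by simp)
                rw [erase_triple_left] at hps
                rw [hCsing, ht2]
                exact hps
              have hsubF : ({q + 1, q + 2} : Finset ℕ) ⊆ F := by
                intro y hy
                rcases Finset.mem_insert.mp hy with h | h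
                · exact h ▸ hq1F
                · rw [Finset.mem_singleton] at h
                  exact h ▸ hq2F
              have hneF : ({q + 1, q + 2} : Finset ℕ) ≠ F := by
                intro h
                rcases Finset.mem_union.mp haS with ha | ha
                · rw [← h] at ha
                  rcases Finset.mem_insert.mp ha with h' | h'
                  · omega
                  · rw [Finset.mem_singleton] at h'
                    omega
                · rw [hCsing, Finset.mem_singleton] at ha
                  omega
              exact h4 _ hsubF hneF hpsa
          · -- 3b-ii
            have hXbne : F ∪ Cr ≠ F := by
              intro h
              have ht' : t ∈ F ∪ Cr := Finset.mem_union_right _ (by rw [hCrt]; exact Finset.mem_singleton_self t)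
              rw [h] at ht'
              have : t ∈ F ∩ C := Finset.mem_inter.mpr ⟨ht', htC⟩
              rw [hdisj] at this
              exact absurd this (Finset.notMem_empty t)
            have hXbS : F ∪ Cr ≠ F ∪ C := by
              intro h
              have hsubC : C ⊆ F ∪ Cr := by rw [h]; exact Finset.subset_union_right
              have hCt : C ⊆ {t} := by
                intro x hx
                rcases Finset.mem_union.mp (hsubC hx) with h' | h'
                · exfalso
                  have : x ∈ F ∩ C := Finset.mem_inter.mpr ⟨h', hx⟩
                  rw [hdisj] at this
                  exact absurd this (Finset.notMem_empty x)
                · rw [hCrt] at h'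
                  exact h'
              rcases Finset.subset_singleton_iff.mp hCt with h' | h'
              · exact hCne.ne_empty h'
              · exact hCsing h'
            have dgtB := dgt (F ∪ Cr) Finset.subset_union_left
              (Finset.union_subset_union_right hCrsub) hXbne hXbS
            have hsplit_t := hsplit {t} (Finset.singleton_subset_iff.mpr htC)
            have hfl : ({t} : Finset ℕ).filter (fun x => x ≤ t) = {t} := by
              rw [Finset.filter_eq_self]
              intro x hx
              rw [Finset.mem_singleton] at hx
              omega
            have hfr : ({t} : Finset ℕ).filter (fun x => t ≤ x) = {t} := by
              rw [Finset.filter_eq_self]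
              intro x hx
              rw [Finset.mem_singleton] at hx
              omega
            rw [hfl, hfr] at hsplit_t
            have cBt : (F ∪ {t}).card = F.card + 1 := by
              have := hcardFB {t} (Finset.singleton_subset_iff.mpr htC)
              simpa using this
            have m1' : eW W Fl ≤ eW W (Fl ∪ {t}) := eW_mono W Finset.subset_union_left
            have m2' : eW W Fr ≤ eW W (Fr ∪ {t}) := eW_mono W Finset.subset_union_left
            have hdgtB' : pdel W F + 1 ≤ pdel W (F ∪ {t}) := by rwa [hCrt] at dgtB
            have hflt : eW W (Fl ∪ {t}) = eW W Fl ∧ eW W (Fr ∪ {t}) = eW W Fr := by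
              simp only [pdel] at hdgtB'
              constructor <;> omega
            have hkey : ∀ B' : Finset ℕ, B' ⊆ C →
                eW W (F ∪ B') + eW W Fl = eW W (Fl ∪ B') + eW W F := by
              intro B' hB'
              have hBl : B'.filter (fun x => x ≤ t) = B' := by
                rw [Finset.filter_eq_self]
                intro x hx
                have : x ∈ Cl := hClC ▸ (hB' hx)
                rw [hCl, Finset.mem_filter] at this
                exact this.2
              have hsp := hsplit B' hB'
              rw [hBl] at hsp
              by_cases htB : t ∈ B'
              · have hBr : B'.filter (fun x => t ≤ x) = {t} := by
                  apply Finset.Subset.antisymm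
                  · intro x hx
                    rw [Finset.mem_filter] at hx
                    have : x ∈ Cl := hClC ▸ (hB' hx.1)
                    rw [hCl, Finset.mem_filter] at this
                    simp only [Finset.mem_singleton]
                    omega
                  · intro x hx
                    rw [Finset.mem_singleton] at hx
                    rw [hx]
                    exact Finset.mem_filter.mpr ⟨htB, le_refl t⟩
                rw [hBr, hflt.2] at hsp
                omega
              · have hBr : B'.filter (fun x => t ≤ x) = ∅ := by
                  rw [Finset.filter_eq_empty_iff]
                  intro x hx hle
                  have : x ∈ Cl := hClC ▸ (hB' hx)
                  rw [hCl, Finset.mem_filter] at this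
                  have : x = t := by omega
                  exact htB (this ▸ hx)
                rw [hBr, Finset.union_empty] at hsp
                omega
            have hFeq := mkPSA Fl (Finset.filter_subset _ _) hkey
            rcases Finset.mem_union.mp hbS with h | h
            · rw [hFeq, hFl] at h
              have := (Finset.mem_filter.mp h).2
              omega
            · have : b ∈ Cl := hClC ▸ h
              rw [hCl, Finset.mem_filter] at this
              omega
        · by_cases hCrC : Cr = C
          · -- mirror of 3b-ii
            have htC : t ∈ C := by
              have hx := hclmem
              rw [hCl, Finset.mem_filter] at hx
              have hx2 : cl ∈ Cr := hCrC ▸ hx.1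
              rw [hCr, Finset.mem_filter] at hx2
              have hclt : cl = t := by omega
              rw [← hclt]
              exact hx.1
            have hClt : Cl = {t} := by
              apply Finset.Subset.antisymm
              · intro x hx
                rw [hCl, Finset.mem_filter] at hx
                have hx2 : x ∈ Cr := hCrC ▸ hx.1
                rw [hCr, Finset.mem_filter] at hx2
                simp only [Finset.mem_singleton]
                omega
              · intro x hx
                rw [Finset.mem_singleton] at hx
                rw [hCl, Finset.mem_filter]
                exact ⟨hx ▸ htC, by omega⟩
            have hCsing : C ≠ {t} := by
              intro h
              apply hClC
              rw [hClt, h]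
            have hXane : F ∪ Cl ≠ F := by
              intro h
              have ht' : t ∈ F ∪ Cl := Finset.mem_union_right _ (by rw [hClt]; exact Finset.mem_singleton_self t)
              rw [h] at ht'
              have : t ∈ F ∩ C := Finset.mem_inter.mpr ⟨ht', htC⟩
              rw [hdisj] at this
              exact absurd this (Finset.notMem_empty t)
            have hXaS : F ∪ Cl ≠ F ∪ C := by
              intro h
              have hsubC : C ⊆ F ∪ Cl := by rw [h]; exact Finset.subset_union_right
              have hCt : C ⊆ {t} := by
                intro x hx
                rcases Finset.mem_union.mp (hsubC hx) with h' | h'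
                · exfalso
                  have : x ∈ F ∩ C := Finset.mem_inter.mpr ⟨h', hx⟩
                  rw [hdisj] at this
                  exact absurd this (Finset.notMem_empty x)
                · rw [hClt] at h'
                  exact h'
              rcases Finset.subset_singleton_iff.mp hCt with h' | h'
              · exact hCne.ne_empty h'
              · exact hCsing h'
            have dgtA := dgt (F ∪ Cl) Finset.subset_union_left
              (Finset.union_subset_union_right hClsub) hXane hXaS
            have hsplit_t := hsplit {t} (Finset.singleton_subset_iff.mpr htC)
            have hfl : ({t} : Finset ℕ).filter (fun x => x ≤ t) = {t} := by
              rw [Finset.filter_eq_self]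
              intro x hx
              rw [Finset.mem_singleton] at hx
              omega
            have hfr : ({t} : Finset ℕ).filter (fun x => t ≤ x) = {t} := by
              rw [Finset.filter_eq_self]
              intro x hx
              rw [Finset.mem_singleton] at hx
              omega
            rw [hfl, hfr] at hsplit_t
            have cAt : (F ∪ {t}).card = F.card + 1 := by
              have := hcardFB {t} (Finset.singleton_subset_iff.mpr htC)
              simpa using this
            have m1' : eW W Fl ≤ eW W (Fl ∪ {t}) := eW_mono W Finset.subset_union_left
            have m2' : eW W Fr ≤ eW W (Fr ∪ {t}) := eW_mono W Finset.subset_union_left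
            have hdgtA' : pdel W F + 1 ≤ pdel W (F ∪ {t}) := by rwa [hClt] at dgtA
            have hflt : eW W (Fl ∪ {t}) = eW W Fl ∧ eW W (Fr ∪ {t}) = eW W Fr := by
              simp only [pdel] at hdgtA'
              constructor <;> omega
            have hkey : ∀ B' : Finset ℕ, B' ⊆ C →
                eW W (F ∪ B') + eW W Fr = eW W (Fr ∪ B') + eW W F := by
              intro B' hB'
              have hBr : B'.filter (fun x => t ≤ x) = B' := by
                rw [Finset.filter_eq_self]
                intro x hx
                have : x ∈ Cr := hCrC ▸ (hB' hx)
                rw [hCr, Finset.mem_filter] at this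
                exact this.2
              have hsp := hsplit B' hB'
              rw [hBr] at hsp
              by_cases htB : t ∈ B'
              · have hBl : B'.filter (fun x => x ≤ t) = {t} := by
                  apply Finset.Subset.antisymm
                  · intro x hx
                    rw [Finset.mem_filter] at hx
                    have : x ∈ Cr := hCrC ▸ (hB' hx.1)
                    rw [hCr, Finset.mem_filter] at this
                    simp only [Finset.mem_singleton]
                    omega
                  · intro x hx
                    rw [Finset.mem_singleton] at hx
                    rw [hx]
                    exact Finset.mem_filter.mpr ⟨htB, le_refl t⟩
                rw [hBl, hflt.1] at hsp
                omega
              · have hBl : B'.filter (fun x => x ≤ t) = ∅ := by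
                  rw [Finset.filter_eq_empty_iff]
                  intro x hx hle
                  have : x ∈ Cr := hCrC ▸ (hB' hx)
                  rw [hCr, Finset.mem_filter] at this
                  have : x = t := by omega
                  exact htB (this ▸ hx)
                rw [hBl, Finset.union_empty] at hsp
                omega
            have hFeq := mkPSA Fr (Finset.filter_subset _ _) hkey
            rcases Finset.mem_union.mp haS with h | h
            · rw [hFeq, hFr] at h
              have := (Finset.mem_filter.mp h).2
              omega
            · have : a ∈ Cr := hCrC ▸ h
              rw [hCr, Finset.mem_filter] at this
              omega
          · -- both sides proper : contradiction by counting
            have hXaF : F ∪ Cl ≠ F := by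
              intro h
              have hcl' : cl ∈ F := by
                rw [← h]
                exact Finset.mem_union_right _ hclmem
              have : cl ∈ F ∩ C := Finset.mem_inter.mpr ⟨hcl', hClsub hclmem⟩
              rw [hdisj] at this
              exact absurd this (Finset.notMem_empty cl)
            have hXbF : F ∪ Cr ≠ F := by
              intro h
              have hcr' : cr ∈ F := by
                rw [← h]
                exact Finset.mem_union_right _ hcrmem
              have : cr ∈ F ∩ C := Finset.mem_inter.mpr ⟨hcr', hCrsub hcrmem⟩
              rw [hdisj] at this
              exact absurd this (Finset.notMem_empty cr)
            have hXaS : F ∪ Cl ≠ F ∪ C := by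
              intro h
              apply hClC
              apply Finset.Subset.antisymm hClsub
              intro x hx
              have : x ∈ F ∪ Cl := by rw [h]; exact Finset.mem_union_right _ hx
              rcases Finset.mem_union.mp this with h' | h'
              · exfalso
                have : x ∈ F ∩ C := Finset.mem_inter.mpr ⟨h', hx⟩
                rw [hdisj] at this
                exact absurd this (Finset.notMem_empty x)
              · exact h'
            have hXbS : F ∪ Cr ≠ F ∪ C := by
              intro h
              apply hCrC
              apply Finset.Subset.antisymm hCrsub
              intro x hx
              have : x ∈ F ∪ Cr := by rw [h]; exact Finset.mem_union_right _ hx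
              rcases Finset.mem_union.mp this with h' | h'
              · exfalso
                have : x ∈ F ∩ C := Finset.mem_inter.mpr ⟨h', hx⟩
                rw [hdisj] at this
                exact absurd this (Finset.notMem_empty x)
              · exact h'
            have dgtA := dgt (F ∪ Cl) Finset.subset_union_left
              (Finset.union_subset_union_right hClsub) hXaF hXaS
            have dgtB := dgt (F ∪ Cr) Finset.subset_union_left
              (Finset.union_subset_union_right hCrsub) hXbF hXbS
            simp only [pdel] at dgtA dgtB
            omega
  -- use NC to get the interval structure
  have hSne : (F ∪ C).Nonempty := hCne.mono Finset.subset_union_right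
  set p := (F ∪ C).min' hSne with hpdef
  set r := (F ∪ C).max' hSne with hrdef
  have hpS : p ∈ F ∪ C := Finset.min'_mem _ hSne
  have hrS : r ∈ F ∪ C := Finset.max'_mem _ hSne
  have hple : ∀ x ∈ F ∪ C, p ≤ x := fun x => Finset.min'_le _ x
  have hler : ∀ x ∈ F ∪ C, x ≤ r := fun x => Finset.le_max' _ x
  have hSIcc : F ∪ C = Finset.Icc p r := by
    apply Finset.Subset.antisymm
    · intro x hx
      rw [Finset.mem_Icc]
      exact ⟨hple x hx, hler x hx⟩
    · intro x hx
      rw [Finset.mem_Icc] at hx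
      by_contra hxS
      have hplt : p < x := lt_of_le_of_ne hx.1 (fun h => hxS (h ▸ hpS))
      have hltr : x < r := lt_of_le_of_ne hx.2 (fun h => hxS (h.symm ▸ hrS))
      apply NC x ⟨p, hpS, hplt⟩ ⟨r, hrS, hltr⟩
      intro q hW hq hq1 hq2
      by_contra hno
      push_neg at hno
      have hxq : x = q + 1 := by omega
      exact hxS (hxq ▸ hq1)
  have hcard3 : 3 ≤ (F ∪ C).card := by
    have hC1 : 1 ≤ C.card := Finset.card_pos.mpr hCne
    have he1 : 1 ≤ eW W (F ∪ C) := by omega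
    have := eW_bound W he1
    omega
  have hcardS : (F ∪ C).card = r + 1 - p := by rw [hSIcc, Nat.card_Icc]
  have hpr2 : p + 2 ≤ r := by omega
  have hWin : ∀ q, p ≤ q → q + 2 ≤ r → W q := by
    intro q0 hq0p hq0r
    by_contra hW0
    apply NC (q0 + 1) ⟨p, hpS, by omega⟩ ⟨r, hrS, by omega⟩
    intro q hW hq hq1 hq2
    have hqI : q ∈ Finset.Icc p r := hSIcc ▸ hq
    have hq2I : q + 2 ∈ Finset.Icc p r := hSIcc ▸ hq2
    rw [Finset.mem_Icc] at hqI hq2I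
    have hne : q ≠ q0 := fun h => hW0 (h ▸ hW)
    omega
  have heS : eW W (F ∪ C) = r - 1 - p := by
    rw [hSIcc]
    exact eW_Icc W p r hpr2 hWin
  have hpdF : F.card = eW W F + 2 := by omega
  by_cases hn3 : (F ∪ C).card = 3
  · have hC1 : C.card = 1 := by
      have : 1 ≤ C.card := Finset.card_pos.mpr hCne
      omega
    obtain ⟨x, hx⟩ := Finset.card_eq_one.mp hC1
    refine ⟨p, r, hpr2, hSIcc, hWin, Or.inr ⟨by omega, x, hx, ?_⟩⟩
    ext y
    rw [Finset.mem_erase]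
    constructor
    · intro hy
      refine ⟨?_, Finset.mem_union_left _ hy⟩
      intro h
      have hc : y ∈ F ∩ C := Finset.mem_inter.mpr ⟨hy, by rw [hx, Finset.mem_singleton]; exact h⟩
      rw [hdisj] at hc
      exact absurd hc (Finset.notMem_empty y)
    · rintro ⟨hyx, hyS⟩
      rcases Finset.mem_union.mp hyS with h | h
      · exact h
      · rw [hx, Finset.mem_singleton] at h
        exact absurd h hyx
  · have hn4 : 4 ≤ (F ∪ C).card := by omega
    have hnotFC : ∀ y, y ∈ F → y ∈ C → False := by
      intro y hyF hyC
      have hc : y ∈ F ∩ C := Finset.mem_inter.mpr ⟨hyF, hyC⟩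
      rw [hdisj] at hc
      exact absurd hc (Finset.notMem_empty y)
    -- p ∈ F
    have hpF : p ∈ F := by
      by_contra hpF
      have hpC : p ∈ C := by
        rcases Finset.mem_union.mp hpS with h | h
        · exact absurd h hpF
        · exact h
      by_cases hCp : C = {p}
      · have hp1F : p + 1 ∈ F := by
          have hmem : p + 1 ∈ F ∪ C := by rw [hSIcc, Finset.mem_Icc]; omega
          rcases Finset.mem_union.mp hmem with h | h
          · exact h
          · rw [hCp, Finset.mem_singleton] at h
            omega
        have hp2F : p + 2 ∈ F := by
          have hmem : p + 2 ∈ F ∪ C := by rw [hSIcc, Finset.mem_Icc]; omega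
          rcases Finset.mem_union.mp hmem with h | h
          · exact h
          · rw [hCp, Finset.mem_singleton] at h
            omega
        have hWp : W p := hWin p le_rfl (by omega)
        have hpsa : PSA W {p + 1, p + 2} C := by
          have hps := psa_triple W hWp (x := p) (by simp)
          rw [erase_triple_left] at hps
          rw [hCp]
          exact hps
        have hsubF : ({p + 1, p + 2} : Finset ℕ) ⊆ F := by
          intro y hy
          rcases Finset.mem_insert.mp hy with h | h
          · exact h ▸ hp1F
          · rw [Finset.mem_singleton] at h
            exact h ▸ hp2F
        have hneF : ({p + 1, p + 2} : Finset ℕ) ≠ F := by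
          intro h
          rcases Finset.mem_union.mp hrS with hr | hr
          · rw [← h] at hr
            rcases Finset.mem_insert.mp hr with h' | h'
            · omega
            · rw [Finset.mem_singleton] at h'
              omega
          · rw [hCp, Finset.mem_singleton] at hr
            omega
        exact h4 _ hsubF hneF hpsa
      · have hBne : (C.erase p).Nonempty := by
          rcases Finset.eq_empty_or_nonempty (C.erase p) with h | h
          · exfalso
            apply hCp
            apply Finset.eq_singleton_iff_unique_mem.mpr
            refine ⟨hpC, fun y hy => ?_⟩
            by_contra hyne
            have : y ∈ C.erase p := Finset.mem_erase.mpr ⟨hyne, hy⟩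
            rw [h] at this
            exact absurd this (Finset.notMem_empty y)
          · exact h
        have hXeq : F ∪ C.erase p = (F ∪ C).erase p := by
          ext y
          simp only [Finset.mem_union, Finset.mem_erase]
          constructor
          · rintro (h | ⟨hne, h⟩)
            · exact ⟨fun hy => hnotFC y h (hy ▸ hpC), Or.inl h⟩
            · exact ⟨hne, Or.inr h⟩
          · rintro ⟨hne, h | h⟩
            · exact Or.inl h
            · exact Or.inr ⟨hne, h⟩
        have hErase : (F ∪ C).erase p = Finset.Icc (p + 1) r := by
          rw [hSIcc]
          ext y
          simp only [Finset.mem_erase, Finset.mem_Icc]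
          omega
        have heE : eW W ((F ∪ C).erase p) = r - 1 - (p + 1) := by
          rw [hErase]
          exact eW_Icc W (p + 1) r (by omega) (fun q hq hq2 => hWin q (by omega) hq2)
        have hFsubE : F ⊆ (F ∪ C).erase p := by
          rw [← hXeq]
          exact Finset.subset_union_left
        have hEsub : (F ∪ C).erase p ⊆ F ∪ C := Finset.erase_subset _ _
        have hEneF : (F ∪ C).erase p ≠ F := by
          intro h
          obtain ⟨y, hy⟩ := hBne
          have hyF : y ∈ F := by
            rw [← h, ← hXeq]
            exact Finset.mem_union_right _ hy
          rw [Finset.mem_erase] at hy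
          exact hnotFC y hyF hy.2
        have hEneS : (F ∪ C).erase p ≠ F ∪ C := by
          intro h
          have : p ∈ (F ∪ C).erase p := h.symm ▸ hpS
          exact absurd this (Finset.notMem_erase p _)
        have hd := dgt ((F ∪ C).erase p) hFsubE hEsub hEneF hEneS
        have hcE : ((F ∪ C).erase p).card = (F ∪ C).card - 1 :=
          Finset.card_erase_of_mem hpS
        simp only [pdel] at hd
        omega
    -- r ∈ F
    have hrF : r ∈ F := by
      by_contra hrF
      have hrC : r ∈ C := by
        rcases Finset.mem_union.mp hrS with h | h
        · exact absurd h hrF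
        · exact h
      by_cases hCr : C = {r}
      · obtain ⟨q2, hq2⟩ : ∃ q2, r = q2 + 2 := ⟨r - 2, by omega⟩
        have hq2F : q2 ∈ F := by
          have hmem : q2 ∈ F ∪ C := by rw [hSIcc, Finset.mem_Icc]; omega
          rcases Finset.mem_union.mp hmem with h | h
          · exact h
          · rw [hCr, Finset.mem_singleton] at h
            omega
        have hq21F : q2 + 1 ∈ F := by
          have hmem : q2 + 1 ∈ F ∪ C := by rw [hSIcc, Finset.mem_Icc]; omega
          rcases Finset.mem_union.mp hmem with h | h
          · exact h
          · rw [hCr, Finset.mem_singleton] at h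
            omega
        have hWq : W q2 := hWin q2 (by omega) (by omega)
        have hpsa : PSA W {q2, q2 + 1} C := by
          have hps := psa_triple W hWq (x := q2 + 2) (by simp)
          rw [erase_triple_right] at hps
          rw [hCr, hq2]
          exact hps
        have hsubF : ({q2, q2 + 1} : Finset ℕ) ⊆ F := by
          intro y hy
          rcases Finset.mem_insert.mp hy with h | h
          · exact h ▸ hq2F
          · rw [Finset.mem_singleton] at h
            exact h ▸ hq21F
        have hneF : ({q2, q2 + 1} : Finset ℕ) ≠ F := by
          intro h
          rcases Finset.mem_union.mp hpS with hp' | hp'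
          · rw [← h] at hp'
            rcases Finset.mem_insert.mp hp' with h' | h'
            · omega
            · rw [Finset.mem_singleton] at h'
              omega
          · rw [hCr, Finset.mem_singleton] at hp'
            omega
        exact h4 _ hsubF hneF hpsa
      · have hBne : (C.erase r).Nonempty := by
          rcases Finset.eq_empty_or_nonempty (C.erase r) with h | h
          · exfalso
            apply hCr
            apply Finset.eq_singleton_iff_unique_mem.mpr
            refine ⟨hrC, fun y hy => ?_⟩
            by_contra hyne
            have : y ∈ C.erase r := Finset.mem_erase.mpr ⟨hyne, hy⟩
            rw [h] at this
            exact absurd this (Finset.notMem_empty y)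
          · exact h
        have hXeq : F ∪ C.erase r = (F ∪ C).erase r := by
          ext y
          simp only [Finset.mem_union, Finset.mem_erase]
          constructor
          · rintro (h | ⟨hne, h⟩)
            · exact ⟨fun hy => hnotFC y h (hy ▸ hrC), Or.inl h⟩
            · exact ⟨hne, Or.inr h⟩
          · rintro ⟨hne, h | h⟩
            · exact Or.inl h
            · exact Or.inr ⟨hne, h⟩
        have hErase : (F ∪ C).erase r = Finset.Icc p (r - 1) := by
          rw [hSIcc]
          ext y
          simp only [Finset.mem_erase, Finset.mem_Icc]
          omega
        have heE : eW W ((F ∪ C).erase r) = r - 1 - 1 - p := by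
          rw [hErase]
          exact eW_Icc W p (r - 1) (by omega) (fun q hq hq2 => hWin q hq (by omega))
        have hFsubE : F ⊆ (F ∪ C).erase r := by
          rw [← hXeq]
          exact Finset.subset_union_left
        have hEsub : (F ∪ C).erase r ⊆ F ∪ C := Finset.erase_subset _ _
        have hEneF : (F ∪ C).erase r ≠ F := by
          intro h
          obtain ⟨y, hy⟩ := hBne
          have hyF : y ∈ F := by
            rw [← h, ← hXeq]
            exact Finset.mem_union_right _ hy
          rw [Finset.mem_erase] at hy
          exact hnotFC y hyF hy.2
        have hEneS : (F ∪ C).erase r ≠ F ∪ C := by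
          intro h
          have : r ∈ (F ∪ C).erase r := h.symm ▸ hrS
          exact absurd this (Finset.notMem_erase r _)
        have hd := dgt ((F ∪ C).erase r) hFsubE hEsub hEneF hEneS
        have hcE : ((F ∪ C).erase r).card = (F ∪ C).card - 1 :=
          Finset.card_erase_of_mem hrS
        simp only [pdel] at hd
        omega
    -- F = {p, r}
    have hFpr : F = {p, r} := by
      rcases Nat.lt_or_ge F.card 3 with hFc | hFc
      · have hprne : p ≠ r := by omega
        have hsub : ({p, r} : Finset ℕ) ⊆ F := by
          intro y hy
          rcases Finset.mem_insert.mp hy with h | h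
          · exact h ▸ hpF
          · rw [Finset.mem_singleton] at h
            exact h ▸ hrF
        have hc2 : ({p, r} : Finset ℕ).card = 2 := Finset.card_pair hprne
        exact (Finset.eq_of_subset_of_card_le hsub (by omega)).symm
      · exfalso
        have h1e : 1 ≤ eW W F := by omega
        obtain ⟨m, hm⟩ : ∃ m, F.card = m := ⟨F.card, rfl⟩
        obtain ⟨p', hp'⟩ := eW_interval W m F hm h1e (by omega)
        have hFsub : F ⊆ Finset.Icc p r := by
          rw [← hSIcc]
          exact Finset.subset_union_left
        have hpmem : p ∈ Finset.Icc p' (p' + m - 1) := hp' ▸ hpF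
        have hrmem : r ∈ Finset.Icc p' (p' + m - 1) := hp' ▸ hrF
        rw [Finset.mem_Icc] at hpmem hrmem
        have hp'mem : p' ∈ Finset.Icc p r := by
          apply hFsub
          rw [hp', Finset.mem_Icc]
          omega
        have hq'mem : p' + m - 1 ∈ Finset.Icc p r := by
          apply hFsub
          rw [hp', Finset.mem_Icc]
          omega
        rw [Finset.mem_Icc] at hp'mem hq'mem
        have hCc : 1 ≤ C.card := Finset.card_pos.mpr hCne
        omega
    exact ⟨p, r, hpr2, hSIcc, hWin, Or.inl hFpr⟩

lemma wrapper (EG : Set (Finset ℕ)) (m : ℕ) (ι : ℕ → ℕ)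
    (hinj : ∀ i ∈ Finset.Icc 1 m, ∀ j ∈ Finset.Icc 1 m, ι i = ι j → i = j)
    (F C : Finset ℕ) (hdisj : Disjoint F C)
    (hcov : F ∪ C ⊆ (Finset.Icc 1 m).image ι)
    (hwin : ∀ e ∈ EG, e ⊆ F ∪ C →
      ∃ q, 1 ≤ q ∧ q + 2 ≤ m ∧ e = {ι q, ι (q + 1), ι (q + 2)})
    (hmsa : MinSimplyAlg EG F C) :
    ∃ l : ℕ, 3 ≤ l ∧ l ≤ m ∧ ∃ c : ℕ → ℕ,
      (∀ i j, 1 ≤ i → i ≤ l → 1 ≤ j → j ≤ l → c i = c j → i = j) ∧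
      F ∪ C = Finset.image c (Finset.Icc 1 l) ∧
      F = {c 1, c l} ∧
      (∀ e ∈ EG, e ⊆ F ∪ C →
        ∃ i, 1 ≤ i ∧ i ≤ l - 2 ∧ e = {c i, c (i + 1), c (i + 2)}) ∧
      (∀ i, 1 ≤ i → i ≤ l - 2 → ({c i, c (i + 1), c (i + 2)} : Finset ℕ) ∈ EG) := by
  classical
  set W : ℕ → Prop :=
    fun q => 1 ≤ q ∧ q + 2 ≤ m ∧ ({ι q, ι (q + 1), ι (q + 2)} : Finset ℕ) ∈ EG with hWdef
  letI instW : DecidablePred W := Classical.decPred W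
  set F₀ : Finset ℕ := (Finset.Icc 1 m).filter (fun q => ι q ∈ F) with hF₀def
  set C₀ : Finset ℕ := (Finset.Icc 1 m).filter (fun q => ι q ∈ C) with hC₀def
  have hF₀sub : F₀ ⊆ Finset.Icc 1 m := Finset.filter_subset _ _
  have hC₀sub : C₀ ⊆ Finset.Icc 1 m := Finset.filter_subset _ _
  have hS0sub : F₀ ∪ C₀ ⊆ Finset.Icc 1 m := Finset.union_subset hF₀sub hC₀sub
  have himgF : F₀.image ι = F := by
    apply Finset.Subset.antisymm
    · intro x hx
      obtain ⟨q, hq, rfl⟩ := Finset.mem_image.mp hx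
      exact (Finset.mem_filter.mp hq).2
    · intro x hx
      obtain ⟨q, hq, rfl⟩ := Finset.mem_image.mp (hcov (Finset.mem_union_left _ hx))
      exact Finset.mem_image.mpr ⟨q, Finset.mem_filter.mpr ⟨hq, hx⟩, rfl⟩
  have himgC : C₀.image ι = C := by
    apply Finset.Subset.antisymm
    · intro x hx
      obtain ⟨q, hq, rfl⟩ := Finset.mem_image.mp hx
      exact (Finset.mem_filter.mp hq).2
    · intro x hx
      obtain ⟨q, hq, rfl⟩ := Finset.mem_image.mp (hcov (Finset.mem_union_right _ hx))
      exact Finset.mem_image.mpr ⟨q, Finset.mem_filter.mpr ⟨hq, hx⟩, rfl⟩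
  have himgS : (F₀ ∪ C₀).image ι = F ∪ C := by
    rw [Finset.image_union, himgF, himgC]
  have himgInj : ∀ X Y : Finset ℕ, X ⊆ Finset.Icc 1 m → Y ⊆ Finset.Icc 1 m →
      X.image ι = Y.image ι → X = Y := by
    intro X Y hX hY h
    ext q
    constructor
    · intro hq
      have hmem : ι q ∈ Y.image ι := by rw [← h]; exact Finset.mem_image_of_mem ι hq
      obtain ⟨q', hq', heq⟩ := Finset.mem_image.mp hmem
      rwa [hinj q' (hY hq') q (hX hq) heq] at hq'
    · intro hq
      have hmem : ι q ∈ X.image ι := by rw [h]; exact Finset.mem_image_of_mem ι hq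
      obtain ⟨q', hq', heq⟩ := Finset.mem_image.mp hmem
      rwa [hinj q' (hX hq') q (hY hq) heq] at hq'
  have hcount : ∀ X₀ : Finset ℕ, X₀ ⊆ F₀ ∪ C₀ → hdelta EG (X₀.image ι) = pdel W X₀ := by
    intro X₀ hX₀
    have hX₀m : X₀ ⊆ Finset.Icc 1 m := hX₀.trans hS0sub
    have hcard : (X₀.image ι).card = X₀.card :=
      Finset.card_image_of_injOn (fun a ha b hb => hinj a (hX₀m ha) b (hX₀m hb))
    have hset : {e : Finset ℕ | e ∈ EG ∧ e ⊆ X₀.image ι}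
        = ↑((eWf W X₀).image (fun q => ({ι q, ι (q + 1), ι (q + 2)} : Finset ℕ))) := by
      ext e
      simp only [Set.mem_setOf_eq, Finset.coe_image, Set.mem_image, Finset.mem_coe]
      constructor
      · rintro ⟨heEG, hesub⟩
        have hesubS : e ⊆ F ∪ C :=
          hesub.trans (by rw [← himgS]; exact Finset.image_subset_image hX₀)
        obtain ⟨q, hq1, hq2, he⟩ := hwin e heEG hesubS
        have hmemX : ∀ d, 1 ≤ q + d → q + d ≤ m → ι (q + d) ∈ e → q + d ∈ X₀ := by
          intro d hd1 hd2 hde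
          obtain ⟨q', hq', heq'⟩ := Finset.mem_image.mp (hesub hde)
          have hq'eq : q' = q + d :=
            hinj q' (hX₀m hq') (q + d) (by rw [Finset.mem_Icc]; omega) heq'
          rwa [← hq'eq]
        have hq0 : q ∈ X₀ := by
          have := hmemX 0 (by omega) (by omega) (by rw [he]; simp)
          simpa using this
        have hq1X : q + 1 ∈ X₀ := hmemX 1 (by omega) (by omega) (by rw [he]; simp)
        have hq2X : q + 2 ∈ X₀ := hmemX 2 (by omega) (by omega) (by rw [he]; simp)
        refine ⟨q, ?_, he.symm⟩
        rw [mem_eWf]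
        exact ⟨hq0, ⟨hq1, hq2, by rw [← he]; exact heEG⟩, hq1X, hq2X⟩
      · rintro ⟨q, hq, rfl⟩
        rw [mem_eWf] at hq
        obtain ⟨hqX, hWq, h1X, h2X⟩ := hq
        refine ⟨hWq.2.2, ?_⟩
        intro x hx
        simp only [Finset.mem_insert, Finset.mem_singleton] at hx
        rcases hx with rfl | rfl | rfl
        · exact Finset.mem_image_of_mem ι hqX
        · exact Finset.mem_image_of_mem ι h1X
        · exact Finset.mem_image_of_mem ι h2X
    have hinjwin : Set.InjOn (fun q => ({ι q, ι (q + 1), ι (q + 2)} : Finset ℕ)) ↑(eWf W X₀) := by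
      intro q hq q' hq' heq
      rw [Finset.mem_coe, mem_eWf] at hq hq'
      have hW1 := hq.2.1
      have hW2 := hq'.2.1
      simp only at heq
      have hmem1 : ι q ∈ ({ι q', ι (q' + 1), ι (q' + 2)} : Finset ℕ) := by rw [← heq]; simp
      have hmem2 : ι q' ∈ ({ι q, ι (q + 1), ι (q + 2)} : Finset ℕ) := by rw [heq]; simp
      simp only [Finset.mem_insert, Finset.mem_singleton] at hmem1 hmem2
      have h1 : q = q' ∨ q = q' + 1 ∨ q = q' + 2 := by
        rcases hmem1 with h | h | h
        · exact Or.inl (hinj q (by rw [Finset.mem_Icc]; omega) q' (by rw [Finset.mem_Icc]; omega) h)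
        · exact Or.inr (Or.inl (hinj q (by rw [Finset.mem_Icc]; omega) (q' + 1) (by rw [Finset.mem_Icc]; omega) h))
        · exact Or.inr (Or.inr (hinj q (by rw [Finset.mem_Icc]; omega) (q' + 2) (by rw [Finset.mem_Icc]; omega) h))
      have h2 : q' = q ∨ q' = q + 1 ∨ q' = q + 2 := by
        rcases hmem2 with h | h | h
        · exact Or.inl (hinj q' (by rw [Finset.mem_Icc]; omega) q (by rw [Finset.mem_Icc]; omega) h)
        · exact Or.inr (Or.inl (hinj q' (by rw [Finset.mem_Icc]; omega) (q + 1) (by rw [Finset.mem_Icc]; omega) h))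
        · exact Or.inr (Or.inr (hinj q' (by rw [Finset.mem_Icc]; omega) (q + 2) (by rw [Finset.mem_Icc]; omega) h))
      omega
    have hncard : ({e : Finset ℕ | e ∈ EG ∧ e ⊆ X₀.image ι}).ncard = eW W X₀ := by
      rw [hset, Set.ncard_coe_finset, eW]
      exact Finset.card_image_of_injOn hinjwin
    rw [hdelta, pdel, hncard, hcard]
  obtain ⟨⟨hCnefin, hFCempty, hStrong, hDelta, hMin⟩, hMinF⟩ := hmsa
  have hdisj0 : F₀ ∩ C₀ = ∅ := by
    rw [Finset.eq_empty_iff_forall_notMem]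
    intro q hq
    rw [Finset.mem_inter] at hq
    have h1 := (Finset.mem_filter.mp hq.1).2
    have h2 := (Finset.mem_filter.mp hq.2).2
    exact (Finset.disjoint_left.mp hdisj h1) h2
  have hCne0 : C₀.Nonempty := by
    obtain ⟨x, hx⟩ := hCnefin
    obtain ⟨q, hq, rfl⟩ := Finset.mem_image.mp (hcov (Finset.mem_union_right _ hx))
    exact ⟨q, Finset.mem_filter.mpr ⟨hq, hx⟩⟩
  have hcF : hdelta EG F = pdel W F₀ := by
    have := hcount F₀ Finset.subset_union_left
    rwa [himgF] at this
  have hcS : hdelta EG (F ∪ C) = pdel W (F₀ ∪ C₀) := by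
    have := hcount (F₀ ∪ C₀) (Finset.Subset.refl _)
    rwa [himgS] at this
  have hco1 : ∀ X₀ : Finset ℕ, F₀ ⊆ X₀ → X₀ ⊆ F₀ ∪ C₀ → pdel W F₀ ≤ pdel W X₀ := by
    intro X₀ hFX hXS
    have hs := hStrong.2 (X₀.image ι)
      (by rw [← himgF]; exact Finset.image_subset_image hFX)
      (by rw [← himgS]; exact Finset.coe_subset.mpr (Finset.image_subset_image hXS))
    rwa [hcF, hcount X₀ hXS] at hs
  have hco2 : pdel W (F₀ ∪ C₀) = pdel W F₀ := by
    rw [← hcS, ← hcF]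
    omega
  have hco3 : ∀ B' : Finset ℕ, B' ⊆ C₀ → B' ≠ C₀ → B'.Nonempty →
      pdel W (F₀ ∪ B') ≠ pdel W F₀ := by
    intro B₀' hB₀C hne hnonempty
    have hB'sub : B₀'.image ι ⊆ C := by
      rw [← himgC]; exact Finset.image_subset_image hB₀C
    have hB'ne : B₀'.image ι ≠ C := by
      intro h
      exact hne (himgInj B₀' C₀ (hB₀C.trans hC₀sub) hC₀sub (by rw [h, himgC]))
    have hmin := hMin (B₀'.image ι) hB'sub hB'ne (hnonempty.image ι)
    have himgFB : (F₀ ∪ B₀').image ι = F ∪ B₀'.image ι := by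
      rw [Finset.image_union, himgF]
    have hc4 := hcount (F₀ ∪ B₀')
      (Finset.union_subset Finset.subset_union_left (hB₀C.trans Finset.subset_union_right))
    rw [himgFB] at hc4
    rw [hc4, hcF] at hmin
    omega
  have hco4 : ∀ F' : Finset ℕ, F' ⊆ F₀ → F' ≠ F₀ → ¬ PSA W F' C₀ := by
    intro F₀' hsub hne hPSA
    obtain ⟨hPne, hPdisj, hPstrong, hPeq, hPmin⟩ := hPSA
    have hF₀'m : F₀' ⊆ Finset.Icc 1 m := hsub.trans hF₀sub
    have hcF' : hdelta EG (F₀'.image ι) = pdel W F₀' :=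
      hcount F₀' (hsub.trans Finset.subset_union_left)
    apply hMinF (F₀'.image ι)
      (by rw [← himgF]; exact Finset.image_subset_image hsub)
      (fun h => hne (himgInj F₀' F₀ hF₀'m hF₀sub (by rw [h, himgF])))
    refine ⟨hCnefin, ?_, ⟨?_, ?_⟩, ?_, ?_⟩
    · rw [Finset.eq_empty_iff_forall_notMem]
      intro x hx
      rw [Finset.mem_inter] at hx
      obtain ⟨q, hq, rfl⟩ := Finset.mem_image.mp hx.1
      have hmem : ι q ∈ C₀.image ι := by rw [himgC]; exact hx.2
      obtain ⟨q', hq', heq⟩ := Finset.mem_image.mp hmem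
      have hq'q : q' = q := hinj q' (hC₀sub hq') q (hF₀'m hq) heq
      have : q ∈ F₀ ∩ C₀ := Finset.mem_inter.mpr ⟨hsub hq, hq'q ▸ hq'⟩
      rw [hdisj0] at this
      exact absurd this (Finset.notMem_empty q)
    · exact Finset.coe_subset.mpr Finset.subset_union_left
    · intro X hFX hXsub
      have hXsub' : X ⊆ F₀'.image ι ∪ C := Finset.coe_subset.mp hXsub
      set X₀ : Finset ℕ := (F₀' ∪ C₀).filter (fun q => ι q ∈ X) with hX₀def
      have hX₀sub : X₀ ⊆ F₀' ∪ C₀ := Finset.filter_subset _ _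
      have himgX : X₀.image ι = X := by
        apply Finset.Subset.antisymm
        · intro x hx
          obtain ⟨q, hq, rfl⟩ := Finset.mem_image.mp hx
          exact (Finset.mem_filter.mp hq).2
        · intro x hx
          have hx' : x ∈ F₀'.image ι ∪ C := hXsub' hx
          have hx'' : x ∈ (F₀' ∪ C₀).image ι := by
            rw [Finset.image_union]
            rcases Finset.mem_union.mp hx' with h | h
            · exact Finset.mem_union_left _ h
            · exact Finset.mem_union_right _ (by rw [himgC]; exact h)
          obtain ⟨q, hq, rfl⟩ := Finset.mem_image.mp hx''
          exact Finset.mem_image_of_mem ι (Finset.mem_filter.mpr ⟨hq, hx⟩)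
      have hF₀'X₀ : F₀' ⊆ X₀ := by
        intro q hq
        exact Finset.mem_filter.mpr
          ⟨Finset.mem_union_left _ hq, hFX (Finset.mem_image_of_mem ι hq)⟩
      have hstr := hPstrong X₀ hF₀'X₀ hX₀sub
      have hc2 := hcount X₀ (hX₀sub.trans
        (Finset.union_subset (hsub.trans Finset.subset_union_left) Finset.subset_union_right))
      rw [himgX] at hc2
      rw [hcF', hc2]
      exact hstr
    · have himgFC : (F₀' ∪ C₀).image ι = F₀'.image ι ∪ C := by
        rw [Finset.image_union, himgC]
      have hc3 := hcount (F₀' ∪ C₀)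
        (Finset.union_subset (hsub.trans Finset.subset_union_left) Finset.subset_union_right)
      rw [himgFC] at hc3
      rw [hc3, hcF']
      omega
    · intro B' hB'C hB'ne hB'nonempty
      set B₀' : Finset ℕ := C₀.filter (fun q => ι q ∈ B') with hB₀'def
      have hB₀'C : B₀' ⊆ C₀ := Finset.filter_subset _ _
      have himgB : B₀'.image ι = B' := by
        apply Finset.Subset.antisymm
        · intro x hx
          obtain ⟨q, hq, rfl⟩ := Finset.mem_image.mp hx
          exact (Finset.mem_filter.mp hq).2
        · intro x hx
          have hmem : x ∈ C₀.image ι := by rw [himgC]; exact hB'C hx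
          obtain ⟨q, hq, rfl⟩ := Finset.mem_image.mp hmem
          exact Finset.mem_image_of_mem ι (Finset.mem_filter.mpr ⟨hq, hx⟩)
      have hB₀'ne : B₀' ≠ C₀ := by
        intro h
        apply hB'ne
        rw [← himgB, h, himgC]
      have hB₀'nonempty : B₀'.Nonempty := by
        obtain ⟨x, hx⟩ := hB'nonempty
        have hmem : x ∈ B₀'.image ι := by rw [himgB]; exact hx
        obtain ⟨q, hq, _⟩ := Finset.mem_image.mp hmem
        exact ⟨q, hq⟩
      have hmin := hPmin B₀' hB₀'C hB₀'ne hB₀'nonempty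
      have himgFB : (F₀' ∪ B₀').image ι = F₀'.image ι ∪ B' := by
        rw [Finset.image_union, himgB]
      have hc4 := hcount (F₀' ∪ B₀')
        (Finset.union_subset (hsub.trans Finset.subset_union_left)
          (hB₀'C.trans Finset.subset_union_right))
      rw [himgFB] at hc4
      rw [hc4, hcF']
      omega
  obtain ⟨p, r, hpr, hSIcc0, hWin, hFcase⟩ := core0 W F₀ C₀ hdisj0 hCne0 hco1 hco2 hco3 hco4
  have hIccsub : Finset.Icc p r ⊆ Finset.Icc 1 m := hSIcc0 ▸ hS0sub
  have hp1 : 1 ≤ p := by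
    have := hIccsub (Finset.mem_Icc.mpr ⟨le_refl p, by omega⟩)
    rw [Finset.mem_Icc] at this
    omega
  have hrm : r ≤ m := by
    have := hIccsub (Finset.mem_Icc.mpr (⟨by omega, le_refl r⟩ : p ≤ r ∧ r ≤ r))
    rw [Finset.mem_Icc] at this
    omega
  have himgSr : F ∪ C = (Finset.Icc p r).image ι := by rw [← himgS, hSIcc0]
  have hqIcc : ∀ e : Finset ℕ, e ⊆ F ∪ C → ∀ q, 1 ≤ q → q + 2 ≤ m →
      e = ({ι q, ι (q + 1), ι (q + 2)} : Finset ℕ) → p ≤ q ∧ q + 2 ≤ r := by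
    intro e hesub q hq1 hq2 he
    have hmemq : ∀ d, 1 ≤ q + d → q + d ≤ m → ι (q + d) ∈ e → q + d ∈ Finset.Icc p r := by
      intro d hd1 hd2 hde
      have hmem : ι (q + d) ∈ (Finset.Icc p r).image ι := by
        rw [← himgSr]; exact hesub hde
      obtain ⟨q', hq', heq'⟩ := Finset.mem_image.mp hmem
      have hq'eq : q' = q + d :=
        hinj q' (hIccsub hq') (q + d) (by rw [Finset.mem_Icc]; omega) heq'
      rwa [← hq'eq]
    have h0 : q ∈ Finset.Icc p r := by
      have := hmemq 0 (by omega) (by omega) (by rw [he]; simp)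
      simpa using this
    have h2 : q + 2 ∈ Finset.Icc p r := hmemq 2 (by omega) (by omega) (by rw [he]; simp)
    rw [Finset.mem_Icc] at h0 h2
    omega
  rcases hFcase with hFpr | ⟨hr3, x, hCx, hFx⟩
  · -- generic case : F is the pair of endpoints
    refine ⟨r - p + 1, by omega, by omega, fun i => ι (p + i - 1), ?_, ?_, ?_, ?_, ?_⟩
    · intro i j hi1 hil hj1 hjl heq
      have := hinj (p + i - 1) (by rw [Finset.mem_Icc]; omega)
        (p + j - 1) (by rw [Finset.mem_Icc]; omega) heq
      omega
    · rw [himgSr]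
      have hIccmap : (Finset.Icc 1 (r - p + 1)).image (fun i => p + i - 1) = Finset.Icc p r := by
        ext w
        simp only [Finset.mem_image, Finset.mem_Icc]
        constructor
        · rintro ⟨i, hi, rfl⟩
          omega
        · intro hw
          exact ⟨w - p + 1, by omega, by omega⟩
      rw [← hIccmap, Finset.image_image]
      rfl
    · have hF' : F = ({p, r} : Finset ℕ).image ι := by rw [← hFpr, himgF]
      rw [hF']
      simp only [Finset.image_insert, Finset.image_singleton]
      have e1 : p + 1 - 1 = p := by omega
      have e2 : p + (r - p + 1) - 1 = r := by omega
      rw [e1, e2]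
    · intro e he hesub
      obtain ⟨q, hq1, hq2, heq⟩ := hwin e he hesub
      obtain ⟨hqp, hqr⟩ := hqIcc e hesub q hq1 hq2 heq
      refine ⟨q - p + 1, by omega, by omega, ?_⟩
      rw [heq]
      have e1 : p + (q - p + 1) - 1 = q := by omega
      have e2 : p + (q - p + 1 + 1) - 1 = q + 1 := by omega
      have e3 : p + (q - p + 1 + 2) - 1 = q + 2 := by omega
      show ({ι q, ι (q + 1), ι (q + 2)} : Finset ℕ)
        = {ι (p + (q - p + 1) - 1), ι (p + (q - p + 1 + 1) - 1), ι (p + (q - p + 1 + 2) - 1)}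
      rw [e1, e2, e3]
    · intro i hi1 hi2
      have hWq := hWin (p + i - 1) (by omega) (by omega)
      have hmem : ({ι (p + i - 1), ι (p + i - 1 + 1), ι (p + i - 1 + 2)} : Finset ℕ) ∈ EG :=
        hWq.2.2
      have e2 : p + (i + 1) - 1 = p + i - 1 + 1 := by omega
      have e3 : p + (i + 2) - 1 = p + i - 1 + 2 := by omega
      show ({ι (p + i - 1), ι (p + (i + 1) - 1), ι (p + (i + 2) - 1)} : Finset ℕ) ∈ EG
      rw [e2, e3]
      exact hmem
  · -- degenerate length-3 case
    have hxC₀ : x ∈ C₀ := by rw [hCx]; exact Finset.mem_singleton_self x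
    have hxIcc : x ∈ Finset.Icc p r := by
      rw [← hSIcc0]
      exact Finset.mem_union_right _ hxC₀
    rw [Finset.mem_Icc] at hxIcc
    have hF₀eq : F₀ = (Finset.Icc p (p + 2)).erase x := by
      rw [hFx, hSIcc0, hr3]
    have hx3 : x = p ∨ x = p + 1 ∨ x = p + 2 := by omega
    obtain ⟨y, z, hyzne, hxy, hxz, hFyz⟩ :
        ∃ y z : ℕ, y ≠ z ∧ x ≠ y ∧ x ≠ z ∧ F₀ = {y, z} := by
      rcases hx3 with h | h | h
      · refine ⟨p + 1, p + 2, by omega, by omega, by omega, ?_⟩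
        rw [hF₀eq]
        ext w
        simp only [Finset.mem_erase, Finset.mem_Icc, Finset.mem_insert, Finset.mem_singleton]
        omega
      · refine ⟨p, p + 2, by omega, by omega, by omega, ?_⟩
        rw [hF₀eq]
        ext w
        simp only [Finset.mem_erase, Finset.mem_Icc, Finset.mem_insert, Finset.mem_singleton]
        omega
      · refine ⟨p, p + 1, by omega, by omega, by omega, ?_⟩
        rw [hF₀eq]
        ext w
        simp only [Finset.mem_erase, Finset.mem_Icc, Finset.mem_insert, Finset.mem_singleton]
        omega
    have hyF₀ : y ∈ F₀ := by rw [hFyz]; simp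
    have hzF₀ : z ∈ F₀ := by rw [hFyz]; simp
    have hym : y ∈ Finset.Icc 1 m := hF₀sub hyF₀
    have hzm : z ∈ Finset.Icc 1 m := hF₀sub hzF₀
    have hxm : x ∈ Finset.Icc 1 m := hC₀sub hxC₀
    have hyx : ι y ≠ ι x := fun h => hxy (hinj y hym x hxm h).symm
    have hzx : ι z ≠ ι x := fun h => hxz (hinj z hzm x hxm h).symm
    have hxy' : ι x ≠ ι y := fun h => hxy (hinj x hxm y hym h)
    have hxz' : ι x ≠ ι z := fun h => hxz (hinj x hxm z hzm h)
    have hyz : ι y ≠ ι z := fun h => hyzne (hinj y hym z hzm h)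
    have hzy : ι z ≠ ι y := fun h => hyzne (hinj z hzm y hym h).symm
    have hsetyz : ({y, z} : Finset ℕ) ∪ {x} = {y, x, z} := by
      ext w
      simp only [Finset.mem_union, Finset.mem_insert, Finset.mem_singleton]
      tauto
    have himg3 : ({p, p + 1, p + 2} : Finset ℕ) = {y, x, z} := by
      rw [← hsetyz, ← hFyz, ← hCx, hSIcc0, hr3, triple_eq_Icc p]
    have himgval : ({ι p, ι (p + 1), ι (p + 2)} : Finset ℕ) = {ι y, ι x, ι z} := by
      have h := congrArg (Finset.image ι) himg3
      simpa only [Finset.image_insert, Finset.image_singleton] using h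
    refine ⟨3, le_refl 3, by omega, fun i => if i = 1 then ι y else if i = 2 then ι x else ι z,
      ?_, ?_, ?_, ?_, ?_⟩
    · intro i j hi1 hil hj1 hjl heq
      have hi : i = 1 ∨ i = 2 ∨ i = 3 := by omega
      have hj : j = 1 ∨ j = 2 ∨ j = 3 := by omega
      rcases hi with rfl | rfl | rfl <;> rcases hj with rfl | rfl | rfl <;>
        first
          | rfl
          | (norm_num at heq
             first
               | exact absurd heq hyx
               | exact absurd heq hxy'
               | exact absurd heq hyz
               | exact absurd heq hzy
               | exact absurd heq hzx
               | exact absurd heq hxz')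
    · rw [himgSr]
      have hIccpr : Finset.Icc p r = ({y, x, z} : Finset ℕ) := by
        rw [hr3, ← triple_eq_Icc p]
        exact himg3
      have hIcc13 : Finset.Icc 1 3 = ({1, 2, 3} : Finset ℕ) := by
        ext w
        simp only [Finset.mem_Icc, Finset.mem_insert, Finset.mem_singleton]
        omega
      rw [hIccpr, hIcc13]
      simp only [Finset.image_insert, Finset.image_singleton]
      norm_num
    · rw [← himgF, hFyz]
      simp only [Finset.image_insert, Finset.image_singleton]
      norm_num
    · intro e he hesub
      obtain ⟨q, hq1, hq2, heq⟩ := hwin e he hesub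
      obtain ⟨hqp, hqr⟩ := hqIcc e hesub q hq1 hq2 heq
      have hqeq : q = p := by omega
      subst hqeq
      refine ⟨1, le_refl 1, by omega, ?_⟩
      rw [heq, himgval]
      norm_num
    · intro i hi1 hi2
      have hieq : i = 1 := by omega
      subst hieq
      have hWq := hWin p le_rfl (by omega)
      have hmem : ({ι p, ι (p + 1), ι (p + 2)} : Finset ℕ) ∈ EG := hWq.2.2
      rw [himgval] at hmem
      norm_num
      exact hmem

/-- a minimally simply algebraic extension properly inside a generalized
path is a ternary path whose base is its pair of endpoints. -/
theorem stmt13 (k : ℕ) (hk : 3 ≤ k) (EG : Set (Finset ℕ))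
    (hEG : EG = edgesP k ∨ EG = edgesH k ∨ EG = edgesL k)
    (F C : Finset ℕ) (hdisj : Disjoint F C)
    (hsub : F ∪ C ⊆ Finset.Icc 1 k) (hne : F ∪ C ≠ Finset.Icc 1 k)
    (hmsa : MinSimplyAlg EG F C) :
    ∃ l : ℕ, 3 ≤ l ∧ l ≤ k ∧ ∃ c : ℕ → ℕ,
      (∀ i j, 1 ≤ i → i ≤ l → 1 ≤ j → j ≤ l → c i = c j → i = j) ∧
      F ∪ C = Finset.image c (Finset.Icc 1 l) ∧
      F = {c 1, c l} ∧
      (∀ e ∈ EG, e ⊆ F ∪ C →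
        ∃ i, 1 ≤ i ∧ i ≤ l - 2 ∧ e = {c i, c (i + 1), c (i + 2)}) ∧
      (∀ i, 1 ≤ i → i ≤ l - 2 → ({c i, c (i + 1), c (i + 2)} : Finset ℕ) ∈ EG) := by
  rcases hEG with rfl | rfl | rfl
  · -- ternary path P_k : use the identity placement
    have hinj : ∀ i ∈ Finset.Icc 1 k, ∀ j ∈ Finset.Icc 1 k, (id i : ℕ) = id j → i = j :=
      fun i _ j _ h => h
    have hcov : F ∪ C ⊆ (Finset.Icc 1 k).image id := by
      rw [Finset.image_id]
      exact hsub
    have hwin : ∀ e ∈ edgesP k, e ⊆ F ∪ C →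
        ∃ q, 1 ≤ q ∧ q + 2 ≤ k ∧ e = ({id q, id (q + 1), id (q + 2)} : Finset ℕ) := by
      intro e he _
      obtain ⟨i, hi1, hi2, rfl⟩ := he
      exact ⟨i, hi1, by omega, rfl⟩
    obtain ⟨l, h3, hlk, c, rest⟩ := wrapper (edgesP k) k id hinj F C hdisj hcov hwin hmsa
    exact ⟨l, h3, hlk, c, rest⟩
  · -- closed path H_k : rotate so that a missing vertex comes last
    have hssub : F ∪ C ⊂ Finset.Icc 1 k :=
      ⟨hsub, fun h => hne (Finset.Subset.antisymm hsub h)⟩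
    obtain ⟨v, hvIcc, hvS⟩ := Finset.exists_of_ssubset hssub
    rw [Finset.mem_Icc] at hvIcc
    set ι : ℕ → ℕ := fun q => if v + q ≤ k then v + q else v + q - k with hιdef
    have hinj : ∀ i ∈ Finset.Icc 1 (k - 1), ∀ j ∈ Finset.Icc 1 (k - 1), ι i = ι j → i = j := by
      intro i hi j hj h
      rw [Finset.mem_Icc] at hi hj
      simp only [hιdef] at h
      split_ifs at h <;> omega
    have hcov : F ∪ C ⊆ (Finset.Icc 1 (k - 1)).image ι := by
      intro x hx
      have hxI : x ∈ Finset.Icc 1 k := hsub hx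
      rw [Finset.mem_Icc] at hxI
      have hxv : x ≠ v := fun h => hvS (h ▸ hx)
      refine Finset.mem_image.mpr ⟨if v < x then x - v else x + k - v, ?_, ?_⟩
      · rw [Finset.mem_Icc]
        split_ifs <;> omega
      · simp only [hιdef]
        split_ifs <;> omega
    have hwin : ∀ e ∈ edgesH k, e ⊆ F ∪ C →
        ∃ q, 1 ≤ q ∧ q + 2 ≤ k - 1 ∧ e = ({ι q, ι (q + 1), ι (q + 2)} : Finset ℕ) := by
      intro e he hesub
      have hv : v ∉ e := fun h => hvS (hesub h)
      rcases he with heP | heH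
      · obtain ⟨i, hi1, hi2, rfl⟩ := heP
        have hvne : v ≠ i ∧ v ≠ i + 1 ∧ v ≠ i + 2 := by
          refine ⟨?_, ?_, ?_⟩ <;> (intro h; apply hv; simp [h])
        refine ⟨if v < i then i - v else i + k - v, ?_, ?_, ?_⟩
        · split_ifs <;> omega
        · split_ifs <;> omega
        · have e1 : ι (if v < i then i - v else i + k - v) = i := by
            simp only [hιdef]
            split_ifs <;> omega
          have e2 : ι ((if v < i then i - v else i + k - v) + 1) = i + 1 := by
            simp only [hιdef]
            split_ifs <;> omega
          have e3 : ι ((if v < i then i - v else i + k - v) + 2) = i + 2 := by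
            simp only [hιdef]
            split_ifs <;> omega
          rw [e1, e2, e3]
      · rw [Set.mem_singleton_iff] at heH
        subst heH
        have hvne : v ≠ k - 1 ∧ v ≠ k ∧ v ≠ 1 := by
          refine ⟨?_, ?_, ?_⟩ <;> (intro h; apply hv; simp [h])
        refine ⟨k - 1 - v, by omega, by omega, ?_⟩
        have e1 : ι (k - 1 - v) = k - 1 := by
          simp only [hιdef]
          split_ifs <;> omega
        have e2 : ι (k - 1 - v + 1) = k := by
          simp only [hιdef]
          split_ifs <;> omega
        have e3 : ι (k - 1 - v + 2) = 1 := by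
          simp only [hιdef]
          split_ifs <;> omega
        rw [e1, e2, e3]
    obtain ⟨l, h3, hlk, c, rest⟩ := wrapper (edgesH k) (k - 1) ι hinj F C hdisj hcov hwin hmsa
    exact ⟨l, h3, by omega, c, rest⟩
  · -- loop L_k
    have hssub : F ∪ C ⊂ Finset.Icc 1 k :=
      ⟨hsub, fun h => hne (Finset.Subset.antisymm hsub h)⟩
    obtain ⟨v, hvIcc, hvS⟩ := Finset.exists_of_ssubset hssub
    rw [Finset.mem_Icc] at hvIcc
    set ι : ℕ → ℕ := fun q => if v + q ≤ k then v + q else v + q - k with hιdef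
    have hinj : ∀ i ∈ Finset.Icc 1 (k - 1), ∀ j ∈ Finset.Icc 1 (k - 1), ι i = ι j → i = j := by
      intro i hi j hj h
      rw [Finset.mem_Icc] at hi hj
      simp only [hιdef] at h
      split_ifs at h <;> omega
    have hcov : F ∪ C ⊆ (Finset.Icc 1 (k - 1)).image ι := by
      intro x hx
      have hxI : x ∈ Finset.Icc 1 k := hsub hx
      rw [Finset.mem_Icc] at hxI
      have hxv : x ≠ v := fun h => hvS (h ▸ hx)
      refine Finset.mem_image.mpr ⟨if v < x then x - v else x + k - v, ?_, ?_⟩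
      · rw [Finset.mem_Icc]
        split_ifs <;> omega
      · simp only [hιdef]
        split_ifs <;> omega
    have hwin : ∀ e ∈ edgesL k, e ⊆ F ∪ C →
        ∃ q, 1 ≤ q ∧ q + 2 ≤ k - 1 ∧ e = ({ι q, ι (q + 1), ι (q + 2)} : Finset ℕ) := by
      intro e he hesub
      have hv : v ∉ e := fun h => hvS (hesub h)
      rcases he with heH | heL
      · rcases heH with heP | heH
        · obtain ⟨i, hi1, hi2, rfl⟩ := heP
          have hvne : v ≠ i ∧ v ≠ i + 1 ∧ v ≠ i + 2 := by
            refine ⟨?_, ?_, ?_⟩ <;> (intro h; apply hv; simp [h])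
          refine ⟨if v < i then i - v else i + k - v, ?_, ?_, ?_⟩
          · split_ifs <;> omega
          · split_ifs <;> omega
          · have e1 : ι (if v < i then i - v else i + k - v) = i := by
              simp only [hιdef]
              split_ifs <;> omega
            have e2 : ι ((if v < i then i - v else i + k - v) + 1) = i + 1 := by
              simp only [hιdef]
              split_ifs <;> omega
            have e3 : ι ((if v < i then i - v else i + k - v) + 2) = i + 2 := by
              simp only [hιdef]
              split_ifs <;> omega
            rw [e1, e2, e3]
        · rw [Set.mem_singleton_iff] at heH
          subst heH
          have hvne : v ≠ k - 1 ∧ v ≠ k ∧ v ≠ 1 := by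
            refine ⟨?_, ?_, ?_⟩ <;> (intro h; apply hv; simp [h])
          refine ⟨k - 1 - v, by omega, by omega, ?_⟩
          have e1 : ι (k - 1 - v) = k - 1 := by
            simp only [hιdef]
            split_ifs <;> omega
          have e2 : ι (k - 1 - v + 1) = k := by
            simp only [hιdef]
            split_ifs <;> omega
          have e3 : ι (k - 1 - v + 2) = 1 := by
            simp only [hιdef]
            split_ifs <;> omega
          rw [e1, e2, e3]
      · rw [Set.mem_singleton_iff] at heL
        subst heL
        have hvne : v ≠ k ∧ v ≠ 1 ∧ v ≠ 2 := by
          refine ⟨?_, ?_, ?_⟩ <;> (intro h; apply hv; simp [h])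
        refine ⟨k - v, by omega, by omega, ?_⟩
        have e1 : ι (k - v) = k := by
          simp only [hιdef]
          split_ifs <;> omega
        have e2 : ι (k - v + 1) = 1 := by
          simp only [hιdef]
          split_ifs <;> omega
        have e3 : ι (k - v + 2) = 2 := by
          simp only [hιdef]
          split_ifs <;> omega
        rw [e1, e2, e3]
    obtain ⟨l, h3, hlk, c, rest⟩ := wrapper (edgesL k) (k - 1) ι hinj F C hdisj hcov hwin hmsa
    exact ⟨l, h3, by omega, c, rest⟩
end

section
/- For every k ≥ 3, in the ternary k-path P_k on distinct vertices a_1,…,a_k, the set {a_2,…,a_{k−1}} is minimally simply algebraic over the base {a_1, a_k}. -/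
variable {V : Type*}

open Finset

def IX (k : ℕ) (X : Finset ℕ) : Finset ℕ :=
  (Finset.Icc 1 (k-2)).filter (fun i => i ∈ X ∧ i+1 ∈ X ∧ i+2 ∈ X)

lemma edge_subset_iff {i : ℕ} {X : Finset ℕ} :
    ({i, i+1, i+2} : Finset ℕ) ⊆ X ↔ i ∈ X ∧ i+1 ∈ X ∧ i+2 ∈ X := by
  simp [insert_subset_iff]

lemma edge_card3 (i : ℕ) : ({i, i+1, i+2} : Finset ℕ).card = 3 := by
  rw [card_insert_of_notMem (by simp only [mem_insert, mem_singleton]; omega),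
    card_insert_of_notMem (by simp only [mem_singleton]; omega), card_singleton]

lemma hdelta_edgesP (k : ℕ) (X : Finset ℕ) :
    hdelta (edgesP k) X = (X.card : ℤ) - ((IX k X).card : ℤ) := by
  have hset : {e : Finset ℕ | e ∈ edgesP k ∧ e ⊆ X}
      = ↑((IX k X).image (fun i => ({i, i+1, i+2} : Finset ℕ))) := by
    ext e
    simp only [Set.mem_setOf_eq, coe_image, Set.mem_image, mem_coe, IX, mem_filter,
      mem_Icc, edgesP, Set.mem_setOf_eq]
    constructor
    · rintro ⟨⟨i, h1, h2, rfl⟩, hsub⟩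
      rw [edge_subset_iff] at hsub
      exact ⟨i, ⟨⟨h1, h2⟩, hsub⟩, rfl⟩
    · rintro ⟨i, ⟨⟨h1, h2⟩, hmem⟩, rfl⟩
      exact ⟨⟨i, h1, h2, rfl⟩, edge_subset_iff.mpr hmem⟩
  rw [hdelta, hset, Set.ncard_coe_finset, card_image_of_injOn]
  intro i _ j _ h
  have h' : ({i, i+1, i+2} : Finset ℕ) = {j, j+1, j+2} := h
  have h1 : i ∈ ({j, j+1, j+2} : Finset ℕ) := by rw [← h']; simp
  have h2 : j ∈ ({i, i+1, i+2} : Finset ℕ) := by rw [h']; simp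
  simp only [mem_insert, mem_singleton] at h1 h2
  omega

lemma card_ge_of_mem_IX {k i : ℕ} {X : Finset ℕ} (hi : i ∈ IX k X) : 3 ≤ X.card := by
  simp only [IX, mem_filter, mem_Icc] at hi
  calc 3 = ({i, i+1, i+2} : Finset ℕ).card := (edge_card3 i).symm
    _ ≤ X.card := card_le_card (edge_subset_iff.mpr hi.2)

lemma IX_card_le (k : ℕ) (X : Finset ℕ) : (IX k X).card + min X.card 2 ≤ X.card := by
  rcases (IX k X).eq_empty_or_nonempty with h | ⟨i, hi⟩
  · simp [h]
  · have hX3 : 3 ≤ X.card := card_ge_of_mem_IX hi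
    simp only [IX, mem_filter, mem_Icc] at hi
    obtain ⟨⟨hi1, hi2⟩, hx0, hx1, hx2⟩ := hi
    have hXne : X.Nonempty := ⟨i, hx0⟩
    have hm0X : X.min' hXne ∈ X := X.min'_mem hXne
    have hEne : (X.erase (X.min' hXne)).Nonempty := by
      rw [← card_pos, card_erase_of_mem hm0X]; omega
    have hm1X : (X.erase (X.min' hXne)).min' hEne ∈ X.erase (X.min' hXne) := min'_mem _ _
    have hsub : (IX k X).image (· + 2) ⊆
        (X.erase (X.min' hXne)).erase ((X.erase (X.min' hXne)).min' hEne) := by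
      intro v hv
      simp only [mem_image] at hv
      obtain ⟨j, hj, rfl⟩ := hv
      simp only [IX, mem_filter, mem_Icc] at hj
      obtain ⟨-, hj0, hj1, hj2⟩ := hj
      have h0 : X.min' hXne ≤ j := min'_le _ _ hj0
      have h1 : (X.erase (X.min' hXne)).min' hEne ≤ j + 1 :=
        min'_le _ _ (by rw [mem_erase]; exact ⟨by omega, hj1⟩)
      rw [mem_erase, mem_erase]
      exact ⟨by omega, by omega, hj2⟩
    have hcard := card_le_card hsub
    rw [card_image_of_injective _ (fun a b h => by omega)] at hcard
    rw [card_erase_of_mem hm1X, card_erase_of_mem hm0X] at hcard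
    omega

lemma IX_eq_empty {k : ℕ} {X : Finset ℕ} (h : X.card ≤ 2) : IX k X = ∅ := by
  rcases (IX k X).eq_empty_or_nonempty with he | ⟨i, hi⟩
  · exact he
  · exact absurd (card_ge_of_mem_IX hi) (by omega)

lemma IX_split (k m : ℕ) (X : Finset ℕ) (hm : m ∉ X) :
    (IX k X).card ≤ (IX k (X.filter (· < m))).card + (IX k (X.filter (m < ·))).card := by
  refine le_trans (card_le_card ?_) (card_union_le _ _)
  intro i hi
  simp only [IX, mem_filter, mem_Icc, mem_union] at hi ⊢
  obtain ⟨hik, h0, h1, h2⟩ := hi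
  have hm0 : m ≠ i := fun h => hm (h ▸ h0)
  have hm1 : m ≠ i + 1 := fun h => hm (h ▸ h1)
  have hm2 : m ≠ i + 2 := fun h => hm (h ▸ h2)
  rcases Nat.lt_or_ge m i with h | h
  · exact Or.inr ⟨hik, ⟨h0, by omega⟩, ⟨h1, by omega⟩, ⟨h2, by omega⟩⟩
  · exact Or.inl ⟨hik, ⟨h0, by omega⟩, ⟨h1, by omega⟩, ⟨h2, by omega⟩⟩

/-- in `P_k`, `{a_2, …, a_{k-1}}` is minimally simply algebraic
over `{a_1, a_k}`. -/
theorem stmt14 (k : ℕ) (hk : 3 ≤ k) :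
    MinSimplyAlg (edgesP k) ({1, k} : Finset ℕ) (Finset.Icc 2 (k - 1)) := by
  set A : Finset ℕ := {1, k} with hA
  set B : Finset ℕ := Finset.Icc 2 (k-1) with hB
  have hcardA : A.card = 2 := by
    rw [hA, card_insert_of_notMem (by simp only [mem_singleton]; omega), card_singleton]
  have hδA : hdelta (edgesP k) A = 2 := by
    rw [hdelta_edgesP, IX_eq_empty (by omega), hcardA]; simp
  have hAB : A ∪ B = Finset.Icc 1 k := by
    ext x; simp only [hA, hB, mem_union, mem_insert, mem_singleton, mem_Icc]; omega
  have hIXfull : IX k (Finset.Icc 1 k) = Finset.Icc 1 (k-2) := by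
    ext i; simp only [IX, mem_filter, mem_Icc]; omega
  have hδfull : hdelta (edgesP k) (Finset.Icc 1 k) = 2 := by
    rw [hdelta_edgesP, hIXfull, Nat.card_Icc, Nat.card_Icc]; omega
  have hstrong : Strong (edgesP k) A ↑(A ∪ B) := by
    refine ⟨Finset.coe_subset.mpr subset_union_left, ?_⟩
    intro X hAX _
    have h2 : 2 ≤ X.card := hcardA ▸ card_le_card hAX
    have := IX_card_le k X
    rw [hδA, hdelta_edgesP]
    omega
  refine ⟨⟨⟨2, by simp only [hB, mem_Icc]; omega⟩, ?_, hstrong, ?_, ?_⟩, ?_⟩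
  · ext x
    simp only [hA, hB, mem_inter, mem_insert, mem_singleton, mem_Icc, notMem_empty, iff_false]
    omega
  · rw [hAB, hδfull, hδA]; ring
  · intro B' hsub hne hB'ne heq
    obtain ⟨m, hmB, hmB'⟩ := Finset.exists_of_ssubset (hsub.ssubset_of_ne hne)
    simp only [hB, mem_Icc] at hmB
    have hmX : m ∉ A ∪ B' := by
      simp only [hA, mem_union, mem_insert, mem_singleton]
      push_neg
      exact ⟨⟨by omega, by omega⟩, hmB'⟩
    set X := A ∪ B' with hX
    have h1L : (1:ℕ) ∈ X.filter (· < m) := by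
      rw [mem_filter]
      exact ⟨mem_union_left _ (mem_insert_self 1 _), by omega⟩
    have hkR : k ∈ X.filter (m < ·) := by
      rw [mem_filter]
      exact ⟨mem_union_left _ (by simp [hA]), by omega⟩
    have hfe : X.filter (fun a => ¬ a < m) = X.filter (m < ·) := by
      apply filter_congr
      intro x hx
      have hxm : x ≠ m := fun h => hmX (h ▸ hx)
      omega
    have hLR : (X.filter (· < m)).card + (X.filter (m < ·)).card = X.card := by
      rw [← hfe]
      exact Finset.card_filter_add_card_filter_not (p := (· < m))
    obtain ⟨b, hbB'⟩ := hB'ne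
    have hbB := hsub hbB'
    simp only [hB, mem_Icc] at hbB
    have hbX : b ∈ X := mem_union_right _ hbB'
    have hbm : b ≠ m := fun h => hmB' (h ▸ hbB')
    have hbig : 2 ≤ (X.filter (· < m)).card ∨ 2 ≤ (X.filter (m < ·)).card := by
      rcases Nat.lt_or_ge b m with h | h
      · left
        have hss : ({1, b} : Finset ℕ) ⊆ X.filter (· < m) := by
          intro x hx; simp only [mem_insert, mem_singleton] at hx
          rcases hx with rfl | rfl
          · exact h1L
          · exact mem_filter.mpr ⟨hbX, h⟩
        calc 2 = ({1,b}:Finset ℕ).card := by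
              rw [card_insert_of_notMem (by simp only [mem_singleton]; omega), card_singleton]
          _ ≤ _ := card_le_card hss
      · right
        have hss : ({b, k} : Finset ℕ) ⊆ X.filter (m < ·) := by
          intro x hx; simp only [mem_insert, mem_singleton] at hx
          rcases hx with rfl | rfl
          · exact mem_filter.mpr ⟨hbX, by omega⟩
          · exact hkR
        calc 2 = ({b,k}:Finset ℕ).card := by
              rw [card_insert_of_notMem (by simp only [mem_singleton]; omega), card_singleton]
          _ ≤ _ := card_le_card hss
    have hsplit := IX_split k m X hmX
    have hL := IX_card_le k (X.filter (· < m))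
    have hR := IX_card_le k (X.filter (m < ·))
    have h1L' : 1 ≤ (X.filter (· < m)).card := card_pos.mpr ⟨1, h1L⟩
    have hkR' : 1 ≤ (X.filter (m < ·)).card := card_pos.mpr ⟨k, hkR⟩
    rw [hdelta_edgesP, hδA] at heq
    rcases hbig with h | h <;> omega
  · intro A' hsubA' hneA' hSA
    obtain ⟨hBne, hdisj, -, hδ, -⟩ := hSA
    have hcard' : A'.card ≤ 1 := by
      have := card_lt_card (hsubA'.ssubset_of_ne hneA')
      omega
    have hδA' : hdelta (edgesP k) A' = A'.card := by
      rw [hdelta_edgesP, IX_eq_empty (by omega)]; simp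
    have hdisj' : Disjoint A' B := disjoint_iff_inter_eq_empty.mpr hdisj
    have hcardU : (A' ∪ B).card = A'.card + B.card := card_union_of_disjoint hdisj'
    have hBcard : B.card = k - 2 := by rw [hB, Nat.card_Icc]; omega
    have hle := IX_card_le k (A' ∪ B)
    rw [hdelta_edgesP, hδA'] at hδ
    omega
end

section
/- Fix integers k ≥ 2 and t > k + 1, and consider the hypergraph D̂_t on distinct vertices a_1,…,a_k, g, b_1,…,b_{2t} whose edges are the 3-element sets {b_i, a_i, b_{i+1}} for 1 ≤ i < 2t (writing a_l for a_i where 1 ≤ i ≤ k and i ≡ l (mod k) when l > k) together with {b_{2t}, g, b_1}. Then B = {b_1,…,b_{2t}} is minimally simply algebraic over Â = {a_1,…,a_k, g}. -/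
variable {V : Type*}

/-! The hypergraph `D̂_t` (for `t > k + 1`, `k ≥ 2`), realized concretely on ℕ:
vertices `a_i = i` for `1 ≤ i ≤ k`, `g = k + 1`, `b_i = k + 1 + i` for `1 ≤ i ≤ 2t`. -/

/-- `a_l`, with wraparound: for `l > k`, `a_l = a_i` where `1 ≤ i ≤ k`, `i ≡ l (mod k)`. -/
def aHat (k l : ℕ) : ℕ := (l - 1) % k + 1

/-- the vertex `b_i`. -/
def bHat (k i : ℕ) : ℕ := k + 1 + i

/-- the edge set of `D̂_t`. -/
def edgesDhat (k t : ℕ) : Set (Finset ℕ) :=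
  {e | (∃ i, 1 ≤ i ∧ i < 2 * t ∧ e = {bHat k i, aHat k i, bHat k (i + 1)}) ∨
       e = {bHat k (2 * t), k + 1, bHat k 1}}

/-! ### Auxiliary machinery for `stmt17` -/

/-- cyclic successor on `{1, …, 2t}`. -/
def sigC (t i : ℕ) : ℕ := i % (2 * t) + 1

/-- uniform description of the `2t` edges, indexed by `i ∈ [1, 2t]`. -/
def edgeF (k t i : ℕ) : Finset ℕ :=
  if i = 2 * t then {bHat k (2 * t), k + 1, bHat k 1}
  else {bHat k i, aHat k i, bHat k (i + 1)}

/-- the set of indices of `b`-vertices present in `X` beyond the base `A`. -/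
def Jset (k : ℕ) (X : Finset ℕ) : Finset ℕ :=
  (X \ Finset.Icc 1 (k + 1)).image (fun v => v - (k + 1))

lemma aHat_mem (k l : ℕ) (hk : 1 ≤ k) : 1 ≤ aHat k l ∧ aHat k l ≤ k := by
  unfold aHat
  have := Nat.mod_lt (l - 1) (show 0 < k by omega)
  omega

lemma sigC_mem (t i : ℕ) (ht : 1 ≤ t) : 1 ≤ sigC t i ∧ sigC t i ≤ 2 * t := by
  unfold sigC
  have := Nat.mod_lt i (show 0 < 2 * t by omega)
  omega

lemma mem_edgesDhat (k t : ℕ) (ht : 1 ≤ t) (e : Finset ℕ) :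
    e ∈ edgesDhat k t ↔ ∃ i ∈ Finset.Icc 1 (2 * t), e = edgeF k t i := by
  constructor
  · rintro (⟨i, h1, h2, rfl⟩ | rfl)
    · exact ⟨i, Finset.mem_Icc.mpr (by omega), by rw [edgeF, if_neg (by omega)]⟩
    · exact ⟨2 * t, Finset.mem_Icc.mpr (by omega), by rw [edgeF, if_pos rfl]⟩
  · rintro ⟨i, hi, rfl⟩
    rw [Finset.mem_Icc] at hi
    by_cases h : i = 2 * t
    · subst h; rw [edgeF, if_pos rfl]; right; rfl
    · rw [edgeF, if_neg h]; left; exact ⟨i, hi.1, by omega, rfl⟩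

lemma mem_edgeF (k t i x : ℕ) (hi1 : 1 ≤ i) (hi2 : i ≤ 2 * t) :
    x ∈ edgeF k t i ↔
      (if i = 2 * t then (x = k + 1 + 2 * t ∨ x = k + 1 ∨ x = k + 2)
       else (x = k + 1 + i ∨ x = aHat k i ∨ x = k + 2 + i)) := by
  by_cases h : i = 2 * t
  · subst h
    simp [edgeF, bHat]
  · rw [edgeF, if_neg h, if_neg h]
    simp [bHat]
    omega

lemma edgeF_injOn (k t : ℕ) (hk : 2 ≤ k) (ht : 2 ≤ t) :
    Set.InjOn (edgeF k t) (Finset.Icc 1 (2 * t)) := by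
  intro i hi j hj h
  simp only [Finset.coe_Icc, Set.mem_Icc] at hi hj
  have hai := aHat_mem k i (by omega)
  have haj := aHat_mem k j (by omega)
  by_cases h1 : i = 2 * t <;> by_cases h2 : j = 2 * t
  · omega
  · exfalso
    have : (k + 1) ∈ edgeF k t i := by
      rw [mem_edgeF k t i _ hi.1 hi.2, if_pos h1]; tauto
    rw [h, mem_edgeF k t j _ hj.1 hj.2, if_neg h2] at this
    omega
  · exfalso
    have : (k + 1) ∈ edgeF k t j := by
      rw [mem_edgeF k t j _ hj.1 hj.2, if_pos h2]; tauto
    rw [← h, mem_edgeF k t i _ hi.1 hi.2, if_neg h1] at this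
    omega
  · have m1 : (k + 1 + i) ∈ edgeF k t i := by
      rw [mem_edgeF k t i _ hi.1 hi.2, if_neg h1]; tauto
    have m2 : (k + 1 + j) ∈ edgeF k t j := by
      rw [mem_edgeF k t j _ hj.1 hj.2, if_neg h2]; tauto
    rw [h, mem_edgeF k t j _ hj.1 hj.2, if_neg h2] at m1
    rw [← h, mem_edgeF k t i _ hi.1 hi.2, if_neg h1] at m2
    omega

lemma count_formula (k t : ℕ) (hk : 2 ≤ k) (ht : 2 ≤ t) (S : Finset ℕ) :
    ({e : Finset ℕ | e ∈ edgesDhat k t ∧ e ⊆ S}).ncard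
      = ((Finset.Icc 1 (2 * t)).filter (fun i => edgeF k t i ⊆ S)).card := by
  have hset : {e : Finset ℕ | e ∈ edgesDhat k t ∧ e ⊆ S}
      = ↑(((Finset.Icc 1 (2 * t)).filter (fun i => edgeF k t i ⊆ S)).image (edgeF k t)) := by
    ext e
    simp only [Set.mem_setOf_eq, Finset.coe_image, Set.mem_image, Finset.mem_coe,
      Finset.mem_filter, mem_edgesDhat k t (by omega) e]
    constructor
    · rintro ⟨⟨i, hi, rfl⟩, hsub⟩
      exact ⟨i, ⟨hi, hsub⟩, rfl⟩
    · rintro ⟨i, ⟨hi, hsub⟩, rfl⟩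
      exact ⟨⟨i, hi, rfl⟩, hsub⟩
  rw [hset, Set.ncard_coe_finset]
  apply Finset.card_image_of_injOn
  intro a ha b hb hab
  refine edgeF_injOn k t hk ht ?_ ?_ hab
  · exact Finset.mem_coe.mpr (Finset.mem_of_mem_filter a ha)
  · exact Finset.mem_coe.mpr (Finset.mem_of_mem_filter b hb)

lemma edgeF_subset (k t : ℕ) (hk : 2 ≤ k) (ht : 1 ≤ t) (S : Finset ℕ) (i : ℕ)
    (hi1 : 1 ≤ i) (hi2 : i ≤ 2 * t) :
    edgeF k t i ⊆ S ↔
      ((k + 1 + i) ∈ S ∧ (if i = 2 * t then k + 1 else aHat k i) ∈ S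
        ∧ (k + 1 + sigC t i) ∈ S) := by
  have hs : sigC t i = if i = 2 * t then 1 else i + 1 := by
    by_cases h : i = 2 * t
    · subst h; simp [sigC, Nat.mod_self]
    · rw [sigC, Nat.mod_eq_of_lt (by omega), if_neg h]
  by_cases h : i = 2 * t
  · subst h
    rw [hs, if_pos rfl]
    simp [edgeF, bHat, Finset.insert_subset_iff]
  · rw [edgeF, if_neg h, hs, if_neg h, if_neg h]
    simp [bHat, Finset.insert_subset_iff]

lemma mem_Jset (k t : ℕ) (X : Finset ℕ) (hX : X ⊆ Finset.Icc 1 (k + 1 + 2 * t)) (j : ℕ) :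
    j ∈ Jset k X ↔ (k + 1 + j ∈ X ∧ 1 ≤ j ∧ j ≤ 2 * t) := by
  simp only [Jset, Finset.mem_image, Finset.mem_sdiff, Finset.mem_Icc]
  constructor
  · rintro ⟨v, ⟨hvX, hvA⟩, rfl⟩
    have hv := Finset.mem_Icc.mp (hX hvX)
    have : v = k + 1 + (v - (k + 1)) := by omega
    exact ⟨by rw [← this]; exact hvX, by omega, by omega⟩
  · rintro ⟨h1, h2, h3⟩
    exact ⟨k + 1 + j, ⟨h1, by omega⟩, by omega⟩

lemma Jset_subset (k t : ℕ) (X : Finset ℕ) (hX : X ⊆ Finset.Icc 1 (k + 1 + 2 * t)) :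
    Jset k X ⊆ Finset.Icc 1 (2 * t) := by
  intro j hj
  rw [mem_Jset k t X hX j] at hj
  exact Finset.mem_Icc.mpr ⟨hj.2.1, hj.2.2⟩

lemma card_Jset (k t : ℕ) (X : Finset ℕ) (hA : Finset.Icc 1 (k + 1) ⊆ X)
    (hX : X ⊆ Finset.Icc 1 (k + 1 + 2 * t)) :
    X.card = (k + 1) + (Jset k X).card := by
  have hinj : Set.InjOn (fun v => v - (k + 1)) ↑(X \ Finset.Icc 1 (k + 1)) := by
    intro a ha b hb hab
    simp only [Finset.coe_sdiff, Set.mem_diff, Finset.mem_coe, Finset.mem_Icc] at ha hb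
    have ha1 := Finset.mem_Icc.mp (hX ha.1)
    have hb1 := Finset.mem_Icc.mp (hX hb.1)
    simp only at hab
    omega
  have h1 : (Jset k X).card = (X \ Finset.Icc 1 (k + 1)).card :=
    Finset.card_image_of_injOn hinj
  have h2 : (X \ Finset.Icc 1 (k + 1)).card = X.card - (Finset.Icc 1 (k + 1)).card :=
    Finset.card_sdiff_of_subset hA
  have h3 : (Finset.Icc 1 (k + 1)).card = k + 1 := by simp [Nat.card_Icc]
  have h4 : (Finset.Icc 1 (k + 1)).card ≤ X.card := Finset.card_le_card hA
  omega

/-- The key reduction: for `A ⊆ X ⊆ A ∪ B`, the predimension of `X` is expressed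
through the index set `J` of `b`-vertices in `X`. -/
lemma hdelta_X (k t : ℕ) (hk : 2 ≤ k) (ht : k + 1 < t) (X : Finset ℕ)
    (hA : Finset.Icc 1 (k + 1) ⊆ X) (hX : X ⊆ Finset.Icc 1 (k + 1 + 2 * t)) :
    hdelta (edgesDhat k t) X
      = (k + 1 : ℤ) + (Jset k X).card
        - ((Jset k X).filter (fun i => sigC t i ∈ Jset k X)).card := by
  have ht2 : 2 ≤ t := by omega
  rw [hdelta, count_formula k t hk ht2]
  have hfil : (Finset.Icc 1 (2 * t)).filter (fun i => edgeF k t i ⊆ X)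
      = (Jset k X).filter (fun i => sigC t i ∈ Jset k X) := by
    ext i
    simp only [Finset.mem_filter, Finset.mem_Icc]
    constructor
    · rintro ⟨⟨hi1, hi2⟩, hsub⟩
      rw [edgeF_subset k t hk (by omega) X i hi1 hi2] at hsub
      have hσ := sigC_mem t i (by omega)
      refine ⟨(mem_Jset k t X hX i).mpr ⟨hsub.1, hi1, hi2⟩,
        (mem_Jset k t X hX _).mpr ⟨hsub.2.2, hσ.1, hσ.2⟩⟩
    · rintro ⟨hiJ, hσJ⟩
      have hi := (mem_Jset k t X hX i).mp hiJ
      have hσ := (mem_Jset k t X hX _).mp hσJ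
      refine ⟨⟨hi.2.1, hi.2.2⟩, ?_⟩
      rw [edgeF_subset k t hk (by omega) X i hi.2.1 hi.2.2]
      refine ⟨hi.1, ?_, hσ.1⟩
      by_cases h : i = 2 * t
      · rw [if_pos h]; exact hA (Finset.mem_Icc.mpr ⟨by omega, by omega⟩)
      · rw [if_neg h]
        have := aHat_mem k i (by omega)
        exact hA (Finset.mem_Icc.mpr ⟨this.1, by omega⟩)
  rw [hfil, card_Jset k t X hA hX]
  push_cast
  ring

lemma hdelta_base (k t : ℕ) (hk : 2 ≤ k) (ht : k + 1 < t) (A' : Finset ℕ)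
    (hA' : A' ⊆ Finset.Icc 1 (k + 1)) :
    hdelta (edgesDhat k t) A' = A'.card := by
  rw [hdelta, count_formula k t hk (by omega)]
  have : (Finset.Icc 1 (2 * t)).filter (fun i => edgeF k t i ⊆ A') = ∅ := by
    rw [Finset.filter_eq_empty_iff]
    intro i hi
    rw [Finset.mem_Icc] at hi
    rw [edgeF_subset k t hk (by omega) A' i hi.1 hi.2]
    intro hc
    have := Finset.mem_Icc.mp (hA' hc.1)
    omega
  rw [this]
  simp

/-- Closure under the cyclic successor forces the whole cycle. -/
lemma cycle_closed (t : ℕ) (ht : 1 ≤ t) (J : Finset ℕ) (hJ : J ⊆ Finset.Icc 1 (2 * t))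
    (hne : J.Nonempty) (hcl : ∀ i ∈ J, sigC t i ∈ J) : J = Finset.Icc 1 (2 * t) := by
  refine Finset.Subset.antisymm hJ ?_
  obtain ⟨j, hj⟩ := hne
  have hjb := Finset.mem_Icc.mp (hJ hj)
  have key : ∀ n : ℕ, (j - 1 + n) % (2 * t) + 1 ∈ J := by
    intro n
    induction n with
    | zero =>
      have : (j - 1 + 0) % (2 * t) + 1 = j := by
        rw [Nat.add_zero, Nat.mod_eq_of_lt (by omega)]; omega
      rw [this]; exact hj
    | succ n ih =>
      have h2 := hcl _ ih
      rw [sigC] at h2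
      have heq : ((j - 1 + n) % (2 * t) + 1) % (2 * t) = (j - 1 + (n + 1)) % (2 * t) := by
        conv_rhs => rw [show j - 1 + (n + 1) = (j - 1 + n) + 1 from rfl, Nat.add_mod]
        rw [Nat.one_mod_eq_one.mpr (by omega)]
      rw [heq] at h2
      exact h2
  intro m hm
  rw [Finset.mem_Icc] at hm
  have hfin := key (2 * t + m - j)
  have heq : j - 1 + (2 * t + m - j) = 2 * t + (m - 1) := by omega
  rw [heq, Nat.add_mod_left, Nat.mod_eq_of_lt (by omega)] at hfin
  have hm1 : m - 1 + 1 = m := by omega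
  rwa [hm1] at hfin
  
lemma cycle_lt (t : ℕ) (ht : 1 ≤ t) (J : Finset ℕ) (hJ : J ⊆ Finset.Icc 1 (2 * t))
    (hne : J.Nonempty) (hne2 : J ≠ Finset.Icc 1 (2 * t)) :
    (J.filter (fun i => sigC t i ∈ J)).card < J.card := by
  have hex : ∃ i₀ ∈ J, sigC t i₀ ∉ J := by
    by_contra h
    push_neg at h
    exact hne2 (cycle_closed t ht J hJ hne h)
  obtain ⟨i₀, hi₀, hσ⟩ := hex
  have hsub : J.filter (fun i => sigC t i ∈ J) ⊆ J.erase i₀ := by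
    intro x hx
    rw [Finset.mem_filter] at hx
    refine Finset.mem_erase.mpr ⟨?_, hx.1⟩
    rintro rfl
    exact hσ hx.2
  calc (J.filter (fun i => sigC t i ∈ J)).card ≤ (J.erase i₀).card :=
        Finset.card_le_card hsub
    _ < J.card := Finset.card_erase_lt_of_mem hi₀

/-- in `D̂_t`, `B = {b_1, …, b_{2t}}` is minimally simply algebraic over
`Â = {a_1, …, a_k, g}`. -/
theorem stmt17 (k t : ℕ) (hk : 2 ≤ k) (ht : k + 1 < t) :
    MinSimplyAlg (edgesDhat k t) (Finset.Icc 1 (k + 1))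
      (Finset.Icc (k + 2) (k + 1 + 2 * t)) := by
  set A : Finset ℕ := Finset.Icc 1 (k + 1) with hAdef
  set B : Finset ℕ := Finset.Icc (k + 2) (k + 1 + 2 * t) with hBdef
  have ht2 : 2 ≤ t := by omega
  have hAB : A ∪ B = Finset.Icc 1 (k + 1 + 2 * t) := by
    ext x; simp [hAdef, hBdef, Finset.mem_union, Finset.mem_Icc]; omega
  have hdA : hdelta (edgesDhat k t) A = (k + 1 : ℤ) := by
    rw [hdelta_base k t hk ht A (Finset.Subset.refl A)]
    simp [hAdef, Nat.card_Icc]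
  have hBcard : B.card = 2 * t := by simp [hBdef, Nat.card_Icc]
  -- δ of any intermediate X
  have hdiff : ∀ X : Finset ℕ, A ⊆ X → X ⊆ Finset.Icc 1 (k + 1 + 2 * t) →
      hdelta (edgesDhat k t) X - hdelta (edgesDhat k t) A
        = ((Jset k X).card : ℤ)
          - ((Jset k X).filter (fun i => sigC t i ∈ Jset k X)).card := by
    intro X h1 h2
    rw [hdelta_X k t hk ht X h1 h2, hdA]; ring
  -- the full union gives J = Icc 1 (2t)
  have hJfull : Jset k (A ∪ B) = Finset.Icc 1 (2 * t) := by
    ext j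
    rw [mem_Jset k t (A ∪ B) (by rw [hAB]) j, hAB, Finset.mem_Icc, Finset.mem_Icc]
    omega
  have hd0 : hdelta (edgesDhat k t) (A ∪ B) - hdelta (edgesDhat k t) A = 0 := by
    rw [hdiff (A ∪ B) Finset.subset_union_left (by rw [hAB]), hJfull]
    have : (Finset.Icc 1 (2 * t)).filter (fun i => sigC t i ∈ Finset.Icc 1 (2 * t))
        = Finset.Icc 1 (2 * t) := by
      rw [Finset.filter_eq_self]
      intro i _
      have := sigC_mem t i (by omega)
      exact Finset.mem_Icc.mpr ⟨this.1, this.2⟩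
    rw [this]; ring
  constructor
  · refine ⟨?_, ?_, ⟨?_, ?_⟩, hd0, ?_⟩
    · exact ⟨k + 2, Finset.mem_Icc.mpr ⟨le_refl _, by omega⟩⟩
    · ext x; simp [hAdef, hBdef, Finset.mem_Icc]; omega
    · intro x hx
      rw [Finset.coe_union]
      exact Set.mem_union_left _ hx
    · intro X hAX hXAB
      have hXAB' : X ⊆ Finset.Icc 1 (k + 1 + 2 * t) := by
        rw [← hAB]; exact Finset.coe_subset.mp hXAB
      have := hdiff X hAX hXAB'
      have hfle : ((Jset k X).filter (fun i => sigC t i ∈ Jset k X)).card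
          ≤ (Jset k X).card := Finset.card_le_card (Finset.filter_subset _ _)
      omega
    · intro B' hB'B hB'ne hB'nonempty
      have hXsub : A ∪ B' ⊆ Finset.Icc 1 (k + 1 + 2 * t) := by
        rw [← hAB]
        exact Finset.union_subset_union (Finset.Subset.refl A) hB'B
      rw [hdiff (A ∪ B') Finset.subset_union_left hXsub]
      -- J of A ∪ B'
      have hmemJ : ∀ j, j ∈ Jset k (A ∪ B') ↔ (k + 1 + j ∈ B' ∧ 1 ≤ j ∧ j ≤ 2 * t) := by
        intro j
        rw [mem_Jset k t (A ∪ B') hXsub j]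
        constructor
        · rintro ⟨h1, h2, h3⟩
          rcases Finset.mem_union.mp h1 with h | h
          · have := Finset.mem_Icc.mp h; omega
          · exact ⟨h, h2, h3⟩
        · rintro ⟨h1, h2, h3⟩
          exact ⟨Finset.mem_union_right _ h1, h2, h3⟩
      have hJne : (Jset k (A ∪ B')).Nonempty := by
        obtain ⟨b, hb⟩ := hB'nonempty
        have hbB := Finset.mem_Icc.mp (hB'B hb)
        refine ⟨b - (k + 1), (hmemJ _).mpr ⟨?_, by omega, by omega⟩⟩
        have : k + 1 + (b - (k + 1)) = b := by omega
        rw [this]; exact hb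
      have hJprop : Jset k (A ∪ B') ≠ Finset.Icc 1 (2 * t) := by
        intro hcontra
        apply hB'ne
        refine Finset.Subset.antisymm hB'B ?_
        intro b hb
        have hbB := Finset.mem_Icc.mp hb
        have : b - (k + 1) ∈ Jset k (A ∪ B') := by
          rw [hcontra, Finset.mem_Icc]; omega
        have h2 := (hmemJ _).mp this
        have heq : k + 1 + (b - (k + 1)) = b := by omega
        rw [heq] at h2
        exact h2.1
      have := cycle_lt t (by omega) (Jset k (A ∪ B'))
        (Jset_subset k t (A ∪ B') hXsub) hJne hJprop
      omega
  · -- minimality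
    intro A' hA'A hA'ne hSA
    obtain ⟨_, _, _, heq0, _⟩ := hSA
    -- find a vertex of A missing from A'
    have hex : ∃ v ∈ A, v ∉ A' := by
      by_contra h
      push_neg at h
      exact hA'ne (Finset.Subset.antisymm hA'A h)
    obtain ⟨v, hvA, hvA'⟩ := hex
    have hvb := Finset.mem_Icc.mp hvA
    -- δ(A') = |A'|
    have hdA' := hdelta_base k t hk ht A' hA'A
    -- compute δ(A' ∪ B)
    have hABcard : (A' ∪ B).card = A'.card + 2 * t := by
      rw [Finset.card_union_of_disjoint, hBcard]
      rw [Finset.disjoint_left]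
      intro x hx hxB
      have h1 := Finset.mem_Icc.mp (hA'A hx)
      have h2 := Finset.mem_Icc.mp hxB
      omega
    -- the bad edge index
    have hbad : ∃ i₀ ∈ Finset.Icc 1 (2 * t), ¬ (edgeF k t i₀ ⊆ A' ∪ B) := by
      by_cases hv : v = k + 1
      · refine ⟨2 * t, Finset.mem_Icc.mpr ⟨by omega, le_refl _⟩, ?_⟩
        rw [edgeF_subset k t hk (by omega) _ _ (by omega) (le_refl _), if_pos rfl]
        rintro ⟨-, hmem, -⟩
        rcases Finset.mem_union.mp hmem with h | h
        · exact hvA' (hv ▸ h)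
        · have := Finset.mem_Icc.mp h; omega
      · have hvk : v ≤ k := by omega
        refine ⟨v, Finset.mem_Icc.mpr ⟨by omega, by omega⟩, ?_⟩
        rw [edgeF_subset k t hk (by omega) _ _ (by omega) (by omega),
          if_neg (by omega)]
        have hav : aHat k v = v := by
          rw [aHat, Nat.mod_eq_of_lt (by omega)]; omega
        rw [hav]
        rintro ⟨-, hmem, -⟩
        rcases Finset.mem_union.mp hmem with h | h
        · exact hvA' h
        · have := Finset.mem_Icc.mp h; omega
    obtain ⟨i₀, hi₀, hbad₀⟩ := hbad
    have hcount : ((Finset.Icc 1 (2 * t)).filter (fun i => edgeF k t i ⊆ A' ∪ B)).card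
        < 2 * t := by
      have hsub : (Finset.Icc 1 (2 * t)).filter (fun i => edgeF k t i ⊆ A' ∪ B)
          ⊆ (Finset.Icc 1 (2 * t)).erase i₀ := by
        intro x hx
        rw [Finset.mem_filter] at hx
        refine Finset.mem_erase.mpr ⟨?_, hx.1⟩
        rintro rfl
        exact hbad₀ hx.2
      calc _ ≤ ((Finset.Icc 1 (2 * t)).erase i₀).card := Finset.card_le_card hsub
        _ < (Finset.Icc 1 (2 * t)).card := Finset.card_erase_lt_of_mem hi₀
        _ = 2 * t := by rw [Nat.card_Icc]; omega
    have hdAB' : hdelta (edgesDhat k t) (A' ∪ B)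
        = (A'.card : ℤ) + 2 * t
          - ((Finset.Icc 1 (2 * t)).filter (fun i => edgeF k t i ⊆ A' ∪ B)).card := by
      rw [hdelta, count_formula k t hk ht2, hABcard]
      push_cast
      ring
    rw [hdAB', hdA'] at heq0
    have : (((Finset.Icc 1 (2 * t)).filter (fun i => edgeF k t i ⊆ A' ∪ B)).card : ℤ)
        < 2 * t := by exact_mod_cast hcount
    omega
end
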